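/- arXiv:2507.23584 — 6 statements merged into one kernel-verified Lean document; each statement's English description precedes it below -/
import Mathlib

section
/- Let γ : I → X be locally of bounded variation, let t ∈ I, and let (s_n) be a sequence in (-∞,t) ∩ I with s_n → t. Then the limits lim_{n→∞} Var(γ;[s_n,t]) and lim_{n→∞} d(γ(s_n),γ(t)) both exist and are equal. The analogous statement holds for sequences (s_n) in (t,+∞) ∩ I with s_n → t, where lim_{n→∞} Var(γ;[t,s_n]) = lim_{n→∞} d(γ(t),γ(s_n)). -/
/-!
Embed `X` isometrically in its completion, where a function of bounded variation has a
one-sided limit `ℓ` at `t`. There the variation on `[s, t]` tends to `d(ℓ, γ t)` (the jump at `t`)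
as `s → t⁻`, and so does `d(γ s, γ t)` by continuity of the distance; isometries preserve both
quantities. The right-hand case is symmetric.
-/

open Filter Topology Set

theorem Isometry.eVariationOn_comp {α E F : Type*} [LinearOrder α] [PseudoEMetricSpace E]
    [PseudoEMetricSpace F] {g : E → F} (hg : Isometry g) (f : α → E) (s : Set α) :
    eVariationOn (g ∘ f) s = eVariationOn f s := by
  simp only [eVariationOn, Function.comp_apply, hg.edist_eq]

section

variable {α E : Type*} [LinearOrder α] [TopologicalSpace α] [OrderTopology α]
  [PseudoMetricSpace E] {f : α → E} {a b : α}

open UniformSpace in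
theorem BoundedVariationOn.exists_tendsto_eVariationOn_Icc_and_dist_left
    (hf : BoundedVariationOn f (Icc a b)) (hab : a < b) :
    ∃ L : ℝ, Tendsto (fun y ↦ (eVariationOn f (Icc y b)).toReal) (𝓝[<] b) (𝓝 L) ∧
      Tendsto (fun y ↦ dist (f y) (f b)) (𝓝[<] b) (𝓝 L) := by
  set g : α → Completion E := (↑) ∘ f
  have hg : BoundedVariationOn g (Icc a b) := by
    rwa [BoundedVariationOn, Completion.coe_isometry.eVariationOn_comp]
  have hF : 𝓝[Icc a b ∩ Iio b] b = 𝓝[<] b := by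
    rw [show Icc a b ∩ Iio b = Ico a b by grind, nhdsWithin_Ico_eq_nhdsLT hab]
  obtain ⟨l, hl⟩ := hg.exists_tendsto_left b
  have hvar := hg.tendsto_eVariationOn_Icc_left hl (right_mem_Icc.2 hab.le)
  rw [hF] at hl hvar
  refine ⟨dist (g b) l, ?_, ?_⟩
  · refine ((ENNReal.tendsto_toReal (edist_ne_top _ _)).comp hvar).congr' ?_
    filter_upwards [Ioo_mem_nhdsLT hab] with y hy
    simp only [Function.comp_apply, Icc_inter_Icc, max_eq_right hy.1.le, min_self, g,
      Completion.coe_isometry.eVariationOn_comp]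
  · simpa only [g, Function.comp_apply, Completion.dist_eq, dist_comm l]
      using hl.dist (tendsto_const_nhds (x := g b))

open UniformSpace in
theorem BoundedVariationOn.exists_tendsto_eVariationOn_Icc_and_dist_right
    (hf : BoundedVariationOn f (Icc a b)) (hab : a < b) :
    ∃ L : ℝ, Tendsto (fun y ↦ (eVariationOn f (Icc a y)).toReal) (𝓝[>] a) (𝓝 L) ∧
      Tendsto (fun y ↦ dist (f a) (f y)) (𝓝[>] a) (𝓝 L) := by
  set g : α → Completion E := (↑) ∘ f
  have hg : BoundedVariationOn g (Icc a b) := by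
    rwa [BoundedVariationOn, Completion.coe_isometry.eVariationOn_comp]
  have hF : 𝓝[Icc a b ∩ Ioi a] a = 𝓝[>] a := by
    rw [show Icc a b ∩ Ioi a = Ioc a b by grind, nhdsWithin_Ioc_eq_nhdsGT hab]
  obtain ⟨l, hl⟩ := hg.exists_tendsto_right a
  have hvar := hg.tendsto_eVariationOn_Icc_right hl (left_mem_Icc.2 hab.le)
  rw [hF] at hl hvar
  refine ⟨dist (g a) l, ?_, ?_⟩
  · refine ((ENNReal.tendsto_toReal (edist_ne_top _ _)).comp hvar).congr' ?_
    filter_upwards [Ioo_mem_nhdsGT hab] with y hy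
    simp only [Function.comp_apply, Icc_inter_Icc, min_eq_right hy.2.le, max_self, g,
      Completion.coe_isometry.eVariationOn_comp]
  · simpa only [g, Function.comp_apply, Completion.dist_eq]
      using (tendsto_const_nhds (x := g a)).dist hl

end

theorem speed_var_left_right_limits_general {X : Type*} [MetricSpace X]
    (I : Set ℝ) (γ : ℝ → X)
    (hγ : ∀ a ∈ I, ∀ b ∈ I, a ≤ b → eVariationOn γ (Set.Icc a b) < ⊤)
    (t : ℝ) (ht : t ∈ I) :
    (∀ s : ℕ → ℝ, (∀ n, s n ∈ I ∧ s n < t) → Tendsto s atTop (𝓝 t) →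
      ∃ L : ℝ,
        Tendsto (fun n => (eVariationOn γ (Set.Icc (s n) t)).toReal) atTop (𝓝 L) ∧
        Tendsto (fun n => dist (γ (s n)) (γ t)) atTop (𝓝 L)) ∧
    (∀ s : ℕ → ℝ, (∀ n, s n ∈ I ∧ t < s n) → Tendsto s atTop (𝓝 t) →
      ∃ L : ℝ,
        Tendsto (fun n => (eVariationOn γ (Set.Icc t (s n))).toReal) atTop (𝓝 L) ∧
        Tendsto (fun n => dist (γ t) (γ (s n))) atTop (𝓝 L)) := by
  constructor
  · intro s hs hst
    have hbv : BoundedVariationOn γ (Icc (s 0) t) := (hγ _ (hs 0).1 t ht (hs 0).2.le).ne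
    obtain ⟨L, hvar, hdist⟩ := hbv.exists_tendsto_eVariationOn_Icc_and_dist_left (hs 0).2
    have hs' : Tendsto s atTop (𝓝[<] t) :=
      tendsto_nhdsWithin_iff.2 ⟨hst, Eventually.of_forall fun n ↦ (hs n).2⟩
    exact ⟨L, hvar.comp hs', hdist.comp hs'⟩
  · intro s hs hst
    have hbv : BoundedVariationOn γ (Icc t (s 0)) := (hγ t ht _ (hs 0).1 (hs 0).2.le).ne
    obtain ⟨L, hvar, hdist⟩ := hbv.exists_tendsto_eVariationOn_Icc_and_dist_right (hs 0).2
    have hs' : Tendsto s atTop (𝓝[>] t) :=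
      tendsto_nhdsWithin_iff.2 ⟨hst, Eventually.of_forall fun n ↦ (hs n).2⟩
    exact ⟨L, hvar.comp hs', hdist.comp hs'⟩

/-- For `γ : I → X` locally of bounded variation, `t ∈ I`, and a sequence
`(s_n)` in `(-∞,t) ∩ I` with `s_n → t`, the limits `lim Var(γ;[s_n,t])` and
`lim d(γ(s_n),γ(t))` both exist and coincide; analogously from the right. -/
theorem speed_var_left_right_limits {X : Type*} [MetricSpace X]
    (I : Set ℝ) (hI : I.OrdConnected) (γ : ℝ → X)
    (hγ : ∀ a ∈ I, ∀ b ∈ I, a ≤ b → eVariationOn γ (Set.Icc a b) < ⊤)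
    (t : ℝ) (ht : t ∈ I) :
    (∀ s : ℕ → ℝ, (∀ n, s n ∈ I ∧ s n < t) → Tendsto s atTop (𝓝 t) →
      ∃ L : ℝ,
        Tendsto (fun n => (eVariationOn γ (Set.Icc (s n) t)).toReal) atTop (𝓝 L) ∧
        Tendsto (fun n => dist (γ (s n)) (γ t)) atTop (𝓝 L)) ∧
    (∀ s : ℕ → ℝ, (∀ n, s n ∈ I ∧ t < s n) → Tendsto s atTop (𝓝 t) →
      ∃ L : ℝ,
        Tendsto (fun n => (eVariationOn γ (Set.Icc t (s n))).toReal) atTop (𝓝 L) ∧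
        Tendsto (fun n => dist (γ t) (γ (s n))) atTop (𝓝 L)) :=
  speed_var_left_right_limits_general I γ hγ t ht
end

section
/- Let γ : I → X be locally of bounded variation, fix c ∈ I, and define V_γ : I → ℝ by V_γ(t) = Var(γ;[c,t]) for t ≥ c and V_γ(t) = −Var(γ;[t,c]) for t ≤ c. Then for every t ∈ I, γ is left-continuous at t if and only if V_γ is left-continuous at t, and γ is right-continuous at t if and only if V_γ is right-continuous at t. In particular, the set of discontinuity points of γ equals the set of discontinuity points of V_γ. -/
open Filter Topology Set

/-!
On an interval `I`, `V` is Mathlib's signed variation `variationOnFromTo γ I c`, because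
`I ∩ [a, b] = [a, b]` for `a, b ∈ I`. Continuity of `V` from one side passes to `γ` through the
bound `d(γ x, γ y) ≤ |V x - V y|`. Conversely, the one-sided jump of `V` at `t` is the distance
from `γ t` to the corresponding one-sided limit of `γ`, which vanishes when `γ` is continuous
from that side.
-/

theorem continuousWithinAt_iff_Iio_and_Ioi {α Y : Type*} [LinearOrder α] [TopologicalSpace α]
    [TopologicalSpace Y] {f : α → Y} {s : Set α} {b : α} :
    ContinuousWithinAt f s b ↔
      ContinuousWithinAt f (s ∩ Iio b) b ∧ ContinuousWithinAt f (s ∩ Ioi b) b := by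
  rw [← continuousWithinAt_union, ← inter_union_distrib_left, Iio_union_Ioi, ← sdiff_eq,
    continuousWithinAt_sdiff_self]

theorem Set.OrdConnected.locallyBoundedVariationOn {α E : Type*} [LinearOrder α]
    [PseudoEMetricSpace E] {f : α → E} {s : Set α} (hs : s.OrdConnected)
    (hf : ∀ a ∈ s, ∀ b ∈ s, a ≤ b → eVariationOn f (Icc a b) < ⊤) :
    LocallyBoundedVariationOn f s := by
  intro a b ha hb
  rcases le_or_gt a b with hab | hba
  · rw [BoundedVariationOn, inter_eq_right.2 (hs.out ha hb)]
    exact (hf a ha b hb hab).ne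
  · simp [BoundedVariationOn, Icc_eq_empty_of_lt hba]

namespace variationOnFromTo

variable {α : Type*} [LinearOrder α] {E : Type*} [PseudoMetricSpace E]
  {f : α → E} {s : Set α} {a b : α}

theorem dist_le_dist (hf : LocallyBoundedVariationOn f s) (ha : a ∈ s) {x y : α}
    (hx : x ∈ s) (hy : y ∈ s) :
    dist (f x) (f y) ≤ dist (variationOnFromTo f s a x) (variationOnFromTo f s a y) := by
  wlog hxy : x ≤ y generalizing x y
  · rw [dist_comm, dist_comm (variationOnFromTo f s a x)]
    exact this hy hx (le_of_not_ge hxy)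
  calc dist (f x) (f y) ≤ variationOnFromTo f s x y := by
        rw [variationOnFromTo.eq_of_le f s hxy, dist_edist]
        exact ENNReal.toReal_mono (hf x y hx hy)
          (eVariationOn.edist_le f ⟨hx, le_rfl, hxy⟩ ⟨hy, hxy, le_rfl⟩)
    _ = variationOnFromTo f s a y - variationOnFromTo f s a x :=
        (variationOnFromTo.sub_right hf ha hy hx).symm
    _ ≤ dist (variationOnFromTo f s a x) (variationOnFromTo f s a y) := by
        rw [dist_comm, Real.dist_eq]
        exact le_abs_self _

theorem continuousWithinAt_of_variationOnFromTo [TopologicalSpace α]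
    (hf : LocallyBoundedVariationOn f s) (ha : a ∈ s) (hb : b ∈ s) {t : Set α} (hts : t ⊆ s)
    (h : ContinuousWithinAt (variationOnFromTo f s a) t b) : ContinuousWithinAt f t b := by
  rw [ContinuousWithinAt, tendsto_iff_dist_tendsto_zero] at h ⊢
  refine squeeze_zero' (.of_forall fun _ ↦ dist_nonneg) ?_ h
  filter_upwards [self_mem_nhdsWithin] with x hx using dist_le_dist hf ha (hts hx) hb

variable [TopologicalSpace α] [OrderTopology α]

theorem continuousWithinAt_Iio_iff (hf : LocallyBoundedVariationOn f s) (ha : a ∈ s)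
    (hb : b ∈ s) :
    ContinuousWithinAt (variationOnFromTo f s a) (s ∩ Iio b) b ↔
      ContinuousWithinAt f (s ∩ Iio b) b := by
  refine ⟨continuousWithinAt_of_variationOnFromTo hf ha hb inter_subset_left, fun h ↦ ?_⟩
  have := tendsto_left ha hb hf h
  rwa [dist_self, sub_zero] at this

theorem continuousWithinAt_Ioi_iff (hf : LocallyBoundedVariationOn f s) (ha : a ∈ s)
    (hb : b ∈ s) :
    ContinuousWithinAt (variationOnFromTo f s a) (s ∩ Ioi b) b ↔
      ContinuousWithinAt f (s ∩ Ioi b) b := by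
  refine ⟨continuousWithinAt_of_variationOnFromTo hf ha hb inter_subset_left, fun h ↦ ?_⟩
  have := tendsto_right ha hb hf h
  rwa [dist_self, add_zero] at this

theorem continuousWithinAt_iff (hf : LocallyBoundedVariationOn f s) (ha : a ∈ s) (hb : b ∈ s) :
    ContinuousWithinAt (variationOnFromTo f s a) s b ↔ ContinuousWithinAt f s b := by
  rw [continuousWithinAt_iff_Iio_and_Ioi (s := s), continuousWithinAt_iff_Iio_and_Ioi (s := s),
    continuousWithinAt_Iio_iff hf ha hb, continuousWithinAt_Ioi_iff hf ha hb]

end variationOnFromTo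

/-- For `γ` locally of bounded variation and the signed variation function
`V_γ` based at `c ∈ I`, `γ` is left- (resp. right-) continuous at `t ∈ I` iff `V_γ` is,
and the discontinuity sets of `γ` and `V_γ` (within `I`) coincide. -/
theorem continuity_of_variation_function {X : Type*} [MetricSpace X]
    (I : Set ℝ) (hI : I.OrdConnected) (γ : ℝ → X)
    (hγ : ∀ a ∈ I, ∀ b ∈ I, a ≤ b → eVariationOn γ (Set.Icc a b) < ⊤)
    (c : ℝ) (hc : c ∈ I) (V : ℝ → ℝ)
    (hV₁ : ∀ t ∈ I, c ≤ t → V t = (eVariationOn γ (Set.Icc c t)).toReal)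
    (hV₂ : ∀ t ∈ I, t ≤ c → V t = -(eVariationOn γ (Set.Icc t c)).toReal) :
    (∀ t ∈ I,
      (ContinuousWithinAt γ (I ∩ Set.Iio t) t ↔ ContinuousWithinAt V (I ∩ Set.Iio t) t) ∧
      (ContinuousWithinAt γ (I ∩ Set.Ioi t) t ↔ ContinuousWithinAt V (I ∩ Set.Ioi t) t)) ∧
    {t ∈ I | ¬ ContinuousWithinAt γ I t} = {t ∈ I | ¬ ContinuousWithinAt V I t} := by
  have hf := hI.locallyBoundedVariationOn hγ
  have hV : ∀ t ∈ I, V t = variationOnFromTo γ I c t := by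
    intro t ht
    rcases le_total c t with hct | htc
    · rw [hV₁ t ht hct, variationOnFromTo.eq_of_le _ _ hct, inter_eq_right.2 (hI.out hc ht)]
    · rw [hV₂ t ht htc, variationOnFromTo.eq_of_ge _ _ htc, inter_eq_right.2 (hI.out ht hc)]
  have hV_cont : ∀ t ∈ I, ∀ J ⊆ I,
      ContinuousWithinAt V J t ↔ ContinuousWithinAt (variationOnFromTo γ I c) J t :=
    fun t ht J hJ ↦ continuousWithinAt_congr (fun y hy ↦ hV y (hJ hy)) (hV t ht)
  refine ⟨fun t ht ↦ ⟨?_, ?_⟩, ?_⟩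
  · rw [hV_cont t ht _ inter_subset_left, variationOnFromTo.continuousWithinAt_Iio_iff hf hc ht]
  · rw [hV_cont t ht _ inter_subset_left, variationOnFromTo.continuousWithinAt_Ioi_iff hf hc ht]
  · ext t
    refine and_congr_right fun ht ↦ not_congr ?_
    rw [hV_cont t ht _ subset_rfl, variationOnFromTo.continuousWithinAt_iff hf hc ht]
end

section
/- Let γ : I → X be locally of bounded variation with speed measure ν. Then ν is continuous (has no atoms, i.e. ν({t}) = 0 for all t ∈ I) if and only if γ is continuous. Moreover, if γ is continuous, then ν(J) = Var(γ;J) for every subinterval J ⊆ I. -/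
/-!
The sets `I ∩ B(t, r)` are relatively open subintervals of `I`, so
`ν (I ∩ B(t, r)) = Var(γ; I ∩ B(t, r))`. Local bounded variation makes these finite for small `r`,
so as `r ↓ 0` they decrease to `ν {t}`; and the variations tend to `0` exactly when `γ` is
continuous at `t` within `I`. For continuous `γ` the measure `ν` has no atoms at all (it vanishes
off `I`), so `ν J = ν (interior J) = Var(γ; interior J) ≤ Var(γ; J)`. Conversely `Var(γ; J)` is the
supremum of `Var(γ; [a, b])` over `a ≤ b` in `J`, and by continuity at `a` and `b` this equals
`Var(γ; (a, b)) = ν (a, b) ≤ ν J`.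
-/

open Filter Topology Set MeasureTheory

/-- `ν` is the speed measure of `γ` on the interval `I`: a Borel measure on `I`
(vanishing outside `I`) whose value on every subinterval of `I` that is relatively open
in `I` equals the variation of `γ` there. -/
def IsSpeedMeasure {X : Type*} [MetricSpace X] (γ : ℝ → X) (I : Set ℝ)
    (ν : Measure ℝ) : Prop :=
  ν Iᶜ = 0 ∧
  ∀ J : Set ℝ, J ⊆ I → J.OrdConnected → (∃ U : Set ℝ, IsOpen U ∧ J = U ∩ I) →
    ν J = eVariationOn γ J

open Metric

theorem exists_lt_exists_mem_forall_gt_le {α : Type*} [LinearOrder α] [NoMinOrder α]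
    {s : Set α} {x : α} (hx : x ∈ s) : ∃ a < x, ∃ a' ∈ s, ∀ y ∈ s, a < y → a' ≤ y := by
  by_cases h : ∃ p ∈ s, p < x
  · obtain ⟨p, hp, hpx⟩ := h
    exact ⟨p, hpx, p, hp, fun _ _ hy => hy.le⟩
  · push Not at h
    obtain ⟨a, hax⟩ := exists_lt x
    exact ⟨a, hax, x, hx, fun y hy _ => h y hy⟩

theorem Set.OrdConnected.diff_subset_interior {α : Type*} [ConditionallyCompleteLinearOrder α]
    [TopologicalSpace α] [OrderTopology α] {J : Set α} (hJ : J.OrdConnected) :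
    J \ {sInf J, sSup J} ⊆ interior J := by
  rintro x ⟨hxJ, hx⟩
  simp only [mem_insert_iff, mem_singleton_iff, not_or] at hx
  obtain ⟨p, hpJ, hpx⟩ : ∃ p ∈ J, p < x := by
    by_contra! h
    exact hx.1 (IsLeast.csInf_eq ⟨hxJ, h⟩).symm
  obtain ⟨q, hqJ, hxq⟩ : ∃ q ∈ J, x < q := by
    by_contra! h
    exact hx.2 (IsGreatest.csSup_eq ⟨hxJ, h⟩).symm
  exact mem_interior_iff_mem_nhds.2 (mem_of_superset (Ioo_mem_nhds hpx hxq)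
    (Ioo_subset_Icc_self.trans (hJ.out hpJ hqJ)))

theorem tendsto_measure_inter_ball_nhdsGT {α : Type*} [MetricSpace α] [MeasurableSpace α]
    [OpensMeasurableSpace α] {μ : Measure α} {s : Set α} {x : α} (hs : NullMeasurableSet s μ)
    (hx : x ∈ s) (hfin : ∃ r > 0, μ (s ∩ ball x r) ≠ ⊤) :
    Tendsto (fun r => μ (s ∩ ball x r)) (𝓝[>] 0) (𝓝 (μ {x})) := by
  have hinter : ⋂ r > 0, s ∩ ball x r = {x} := by
    ext y
    simp only [mem_iInter, mem_inter_iff, mem_ball, mem_singleton_iff]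
    refine ⟨fun h => dist_le_zero.1 (le_of_forall_gt fun r hr => (h r hr).2), ?_⟩
    rintro rfl r hr
    exact ⟨hx, by simpa using hr⟩
  rw [← hinter]
  exact tendsto_measure_biInter_gt (fun r _ => hs.inter measurableSet_ball.nullMeasurableSet)
    (fun _ _ _ hij => inter_subset_inter_right _ (ball_subset_ball hij)) hfin

section Variation

variable {X : Type*} [PseudoEMetricSpace X] {f : ℝ → X} {s : Set ℝ} {x : ℝ}

theorem locallyBoundedVariationOn_of_eVariationOn_Icc_lt_top
    (h : ∀ a ∈ s, ∀ b ∈ s, a ≤ b → eVariationOn f (Icc a b) < ⊤) :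
    LocallyBoundedVariationOn f s := by
  intro a b ha hb
  rcases le_or_gt a b with hab | hab
  · exact BoundedVariationOn.mono (h a ha b hb hab).ne inter_subset_right
  · simp [BoundedVariationOn, Icc_eq_empty_of_lt hab]

theorem LocallyBoundedVariationOn.exists_boundedVariationOn_inter_ball
    (hf : LocallyBoundedVariationOn f s) (hx : x ∈ s) :
    ∃ r > 0, BoundedVariationOn f (s ∩ ball x r) := by
  obtain ⟨a, hax, a', ha's, ha'⟩ := exists_lt_exists_mem_forall_gt_le hx
  obtain ⟨c, hxc, c', hc's, hc'⟩ : ∃ c > x, ∃ c' ∈ s, ∀ y ∈ s, y < c → y ≤ c' :=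
    exists_lt_exists_mem_forall_gt_le (α := ℝᵒᵈ) hx
  refine ⟨min (x - a) (c - x), lt_min (sub_pos.2 hax) (sub_pos.2 hxc),
    (hf a' c' ha's hc's).mono ?_⟩
  rintro y ⟨hys, hy⟩
  rw [Real.ball_eq_Ioo, mem_Ioo] at hy
  have := min_le_left (x - a) (c - x)
  have := min_le_right (x - a) (c - x)
  exact ⟨hys, ha' y hys (by linarith), hc' y hys (by linarith)⟩

theorem continuousWithinAt_of_tendsto_eVariationOn_inter_ball (hx : x ∈ s)
    (h : Tendsto (fun r => eVariationOn f (s ∩ ball x r)) (𝓝[>] 0) (𝓝 0)) :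
    ContinuousWithinAt f s x := by
  refine EMetric.tendsto_nhds.2 fun ε hε => ?_
  obtain ⟨r, hrε, hr⟩ := ((h.eventually (gt_mem_nhds hε)).and self_mem_nhdsWithin).exists
  filter_upwards [inter_mem_nhdsWithin s (ball_mem_nhds x hr)] with y hy
  exact (eVariationOn.edist_le f hy ⟨hx, mem_ball_self hr⟩).trans_lt hrε

theorem LocallyBoundedVariationOn.tendsto_eVariationOn_inter_ball
    (hf : LocallyBoundedVariationOn f s) (hx : x ∈ s) (h : ContinuousWithinAt f s x) :
    Tendsto (fun r => eVariationOn f (s ∩ ball x r)) (𝓝[>] 0) (𝓝 0) := by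
  obtain ⟨ρ, hρ, hbv⟩ := hf.exists_boundedVariationOn_inter_ball hx
  set s' := s ∩ ball x ρ
  have hcont : ContinuousWithinAt f s' x := h.mono inter_subset_left
  refine ENNReal.tendsto_nhds_zero.2 fun ε hε => ?_
  have hε2 : 0 < ε / 2 := ENNReal.half_pos hε.ne'
  obtain ⟨δ, hδ, hsmall⟩ := Metric.mem_nhdsWithin_iff.1
    ((ENNReal.tendsto_nhds_zero.1 (hbv.tendsto_eVariationOn_Icc_zero_left
      (hcont.mono inter_subset_left)) _ hε2).and
    (ENNReal.tendsto_nhds_zero.1 (hbv.tendsto_eVariationOn_Icc_zero_right x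
      (hcont.mono inter_subset_left)) _ hε2))
  filter_upwards [Ioo_mem_nhdsGT (lt_min hρ hδ)] with r hr
  have hsub : ∀ y ∈ s ∩ ball x r, y ∈ ball x δ ∩ s' := fun y ⟨hys, hy⟩ =>
    ⟨ball_subset_ball (hr.2.le.trans (min_le_right _ _)) hy,
      hys, ball_subset_ball (hr.2.le.trans (min_le_left _ _)) hy⟩
  have hxr : x ∈ s ∩ ball x r := ⟨hx, mem_ball_self hr.1⟩
  rw [eVariationOn.eq_biSup_inter_Icc]
  refine iSup₂_le fun ⟨a, b⟩ ⟨ha, hb, _⟩ => ?_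
  have hax : min a x ∈ s ∩ ball x r := by rcases min_choice a x with h | h <;> rw [h] <;> assumption
  have hbx : max b x ∈ s ∩ ball x r := by rcases max_choice b x with h | h <;> rw [h] <;> assumption
  calc eVariationOn f (s ∩ ball x r ∩ Icc a b)
      ≤ eVariationOn f (s' ∩ Icc (min a x) (max b x)) :=
        eVariationOn.mono f fun y ⟨hy, hyab⟩ => ⟨(hsub y hy).2,
          (min_le_left a x).trans hyab.1, hyab.2.trans (le_max_left b x)⟩
    _ = eVariationOn f (s' ∩ Icc (min a x) x) + eVariationOn f (s' ∩ Icc x (max b x)) :=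
        (eVariationOn.Icc_add_Icc f (min_le_right a x) (le_max_right b x) (hsub x hxr).2).symm
    _ ≤ ε / 2 + ε / 2 := add_le_add (hsmall (hsub _ hax)).1 (hsmall (hsub _ hbx)).2
    _ = ε := ENNReal.add_halves ε

theorem LocallyBoundedVariationOn.continuousWithinAt_iff_tendsto_eVariationOn_inter_ball
    (hf : LocallyBoundedVariationOn f s) (hx : x ∈ s) :
    ContinuousWithinAt f s x ↔
      Tendsto (fun r => eVariationOn f (s ∩ ball x r)) (𝓝[>] 0) (𝓝 0) :=
  ⟨hf.tendsto_eVariationOn_inter_ball hx, continuousWithinAt_of_tendsto_eVariationOn_inter_ball hx⟩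

theorem eVariationOn_Ioo_eq_Icc_of_continuousOn {a b : ℝ} (hf : ContinuousOn f (Icc a b)) :
    eVariationOn f (Ioo a b) = eVariationOn f (Icc a b) := by
  rcases le_or_gt b a with hba | hab
  · rw [Ioo_eq_empty hba.not_gt, eVariationOn.subsingleton f subsingleton_empty,
      eVariationOn.subsingleton f (subsingleton_Icc_of_ge hba)]
  have hIoc : Ioc a b = Icc a b ∩ Ioi a := by
    ext y; simp only [mem_Ioc, mem_inter_iff, mem_Icc, mem_Ioi]; grind
  have hIoo : Ioo a b = Ioc a b ∩ Iio b := by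
    ext y; simp only [mem_Ioo, mem_inter_iff, mem_Ioc, mem_Iio]; grind
  calc eVariationOn f (Ioo a b) = eVariationOn f (Ioc a b ∩ Iic b) := by
        rw [hIoo]
        exact eVariationOn.eVariationOn_inter_Iio_eq_inter_Iic_of_continuousWithinAt
          (hIoo ▸ right_nhdsWithin_Ioo_neBot hab)
          ((hf b (right_mem_Icc.2 hab.le)).mono (inter_subset_left.trans Ioc_subset_Icc_self))
    _ = eVariationOn f (Icc a b ∩ Ici a) := by
        rw [inter_eq_left.2 Ioc_subset_Iic_self, hIoc]
        exact eVariationOn.eVariationOn_inter_Ioi_eq_inter_Ici_of_continuousWithinAt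
          (hIoc ▸ left_nhdsWithin_Ioc_neBot hab)
          ((hf a (left_mem_Icc.2 hab.le)).mono inter_subset_left)
    _ = eVariationOn f (Icc a b) := by rw [inter_eq_left.2 Icc_subset_Ici_self]

end Variation

namespace IsSpeedMeasure

variable {X : Type*} [MetricSpace X] {γ : ℝ → X} {I : Set ℝ} {ν : Measure ℝ}

theorem measure_eq_of_isOpen (hν : IsSpeedMeasure γ I ν) {U : Set ℝ} (hU : IsOpen U)
    (hUI : U ⊆ I) (hUc : U.OrdConnected) : ν U = eVariationOn γ U :=
  hν.2 U hUI hUc ⟨U, hU, (inter_eq_left.2 hUI).symm⟩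

theorem measure_inter_ball (hν : IsSpeedMeasure γ I ν) (hI : I.OrdConnected) (t r : ℝ) :
    ν (I ∩ ball t r) = eVariationOn γ (I ∩ ball t r) :=
  hν.2 _ inter_subset_left (hI.inter (Real.ball_eq_Ioo t r ▸ ordConnected_Ioo))
    ⟨ball t r, isOpen_ball, inter_comm _ _⟩

theorem tendsto_eVariationOn_inter_ball (hν : IsSpeedMeasure γ I ν) (hI : I.OrdConnected)
    (hγ : LocallyBoundedVariationOn γ I) {t : ℝ} (ht : t ∈ I) :
    Tendsto (fun r => eVariationOn γ (I ∩ ball t r)) (𝓝[>] 0) (𝓝 (ν {t})) := by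
  simp only [← hν.measure_inter_ball hI]
  obtain ⟨r, hr, hbv⟩ := hγ.exists_boundedVariationOn_inter_ball ht
  exact tendsto_measure_inter_ball_nhdsGT hI.measurableSet.nullMeasurableSet ht
    ⟨r, hr, hν.measure_inter_ball hI t r ▸ hbv⟩

theorem measure_singleton_eq_zero_iff (hν : IsSpeedMeasure γ I ν) (hI : I.OrdConnected)
    (hγ : LocallyBoundedVariationOn γ I) {t : ℝ} (ht : t ∈ I) :
    ν {t} = 0 ↔ ContinuousWithinAt γ I t := by
  rw [hγ.continuousWithinAt_iff_tendsto_eVariationOn_inter_ball ht]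
  have hlim := hν.tendsto_eVariationOn_inter_ball hI hγ ht
  exact ⟨fun h => h ▸ hlim, tendsto_nhds_unique hlim⟩

theorem nullSingletonClass (hν : IsSpeedMeasure γ I ν) (hatoms : ∀ t ∈ I, ν {t} = 0) :
    NullSingletonClass ν := by
  refine ⟨fun t => ?_⟩
  by_cases ht : t ∈ I
  · exact hatoms t ht
  · exact measure_mono_null (singleton_subset_iff.2 ht) hν.1

theorem measure_le_eVariationOn (hν : IsSpeedMeasure γ I ν) [NullSingletonClass ν] {J : Set ℝ}
    (hJI : J ⊆ I) (hJ : J.OrdConnected) : ν J ≤ eVariationOn γ J :=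
  calc ν J = ν (J \ {sInf J, sSup J}) := (measure_sdiff_null ((toFinite _).measure_zero ν)).symm
    _ ≤ ν (interior J) := measure_mono hJ.diff_subset_interior
    _ = eVariationOn γ (interior J) :=
      hν.measure_eq_of_isOpen isOpen_interior (interior_subset.trans hJI) hJ.interior
    _ ≤ eVariationOn γ J := eVariationOn.mono γ interior_subset

theorem eVariationOn_le_measure (hν : IsSpeedMeasure γ I ν) (hcont : ContinuousOn γ I)
    {J : Set ℝ} (hJI : J ⊆ I) (hJ : J.OrdConnected) : eVariationOn γ J ≤ ν J := by
  rw [eVariationOn.eq_biSup_inter_Icc]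
  refine iSup₂_le fun ⟨a, b⟩ ⟨ha, hb, _⟩ => ?_
  have hab : Icc a b ⊆ J := hJ.out ha hb
  calc eVariationOn γ (J ∩ Icc a b) = eVariationOn γ (Ioo a b) := by
        rw [inter_eq_right.2 hab,
          eVariationOn_Ioo_eq_Icc_of_continuousOn (hcont.mono (hab.trans hJI))]
    _ = ν (Ioo a b) := (hν.measure_eq_of_isOpen isOpen_Ioo
        (Ioo_subset_Icc_self.trans (hab.trans hJI)) ordConnected_Ioo).symm
    _ ≤ ν J := measure_mono (Ioo_subset_Icc_self.trans hab)

end IsSpeedMeasure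

/-- The speed measure `ν` of `γ ∈ BV_loc(I;X)` has no atoms iff `γ` is
continuous (on `I`); and if `γ` is continuous then `ν(J) = Var(γ;J)` for *every*
subinterval `J ⊆ I`. -/
theorem speed_measure_continuous_iff {X : Type*} [MetricSpace X]
    (I : Set ℝ) (hI : I.OrdConnected) (γ : ℝ → X)
    (hγ : ∀ a ∈ I, ∀ b ∈ I, a ≤ b → eVariationOn γ (Set.Icc a b) < ⊤)
    (ν : Measure ℝ) (hν : IsSpeedMeasure γ I ν) :
    ((∀ t ∈ I, ν {t} = 0) ↔ ContinuousOn γ I) ∧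
    (ContinuousOn γ I →
      ∀ J : Set ℝ, J ⊆ I → J.OrdConnected → ν J = eVariationOn γ J) := by
  have hbv : LocallyBoundedVariationOn γ I :=
    locallyBoundedVariationOn_of_eVariationOn_Icc_lt_top hγ
  have hatoms : (∀ t ∈ I, ν {t} = 0) ↔ ContinuousOn γ I :=
    forall₂_congr fun _ ht => hν.measure_singleton_eq_zero_iff hI hbv ht
  refine ⟨hatoms, fun hcont J hJI hJ => ?_⟩
  have := hν.nullSingletonClass (hatoms.2 hcont)
  exact le_antisymm (hν.measure_le_eVariationOn hJI hJ) (hν.eVariationOn_le_measure hcont hJI hJ)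
end

section
/- Let γ : I → X be a continuous map of locally bounded variation with speed measure ν. Then for every Borel set A ⊆ I one has H¹(γ(A)) ≤ ν(A), where H¹ denotes the one-dimensional (outer) Hausdorff measure on X. If moreover γ is injective, then H¹(γ(A)) = ν(A) for every Borel set A ⊆ I. -/
/-!
For the upper bound, reparametrising by arc length factors `γ` on any `J ⊆ ℝ` through a
`1`-Lipschitz map defined on a set of reals of diameter at most `Var(γ;J)`, so
`H¹(γ(J)) ≤ Var(γ;J)`. Splitting a relatively open `U ⊆ I` along the components of an open set
gives `H¹(γ(U)) ≤ ν(U)`, and outer regularity of `ν` restricted to a relatively open set of finite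
speed measure extends this to all its subsets. Every compact interval with endpoints in `I` lies in
a relatively open interval of finite speed measure, and `I` is a countable directed union of them.

For the equality, if `γ` is injective and continuous, the images of consecutive pieces of a
partition are continua meeting in single points, and a continuum has `H¹`-measure at least the
distance between any two of its points; hence `Var(γ;J) = H¹(γ(J))` for order-connected `J ⊆ I`.
For a Borel `A` inside a relatively open interval `J` of finite speed measure,
`ν(A) + ν(J \ A) = Var(γ;J) = H¹(γ(A)) + H¹(γ(J \ A))` (injective continuous images of Borel
sets are Borel), and the upper bound on both terms forces equality.
-/

open Filter Topology Set MeasureTheory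

section UnitSpeed

variable {E : Type*} [PseudoEMetricSpace E] {f : ℝ → E} {s : Set ℝ}

theorem HasUnitSpeedOn.eVariationOn_inter_Icc (h : HasUnitSpeedOn f s) {x y : ℝ} (hx : x ∈ s)
    (hy : y ∈ s) (hxy : x ≤ y) : eVariationOn f (s ∩ Icc x y) = edist x y := by
  rw [h hx hy, NNReal.coe_one, one_mul, edist_comm, edist_dist, Real.dist_eq,
    abs_of_nonneg (sub_nonneg.2 hxy)]

theorem HasUnitSpeedOn.lipschitzOnWith (h : HasUnitSpeedOn f s) : LipschitzOnWith 1 f s := by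
  intro x hx y hy
  rw [ENNReal.coe_one, one_mul]
  wlog hxy : x ≤ y generalizing x y
  · rw [edist_comm, edist_comm x]
    exact this hy hx (le_of_not_ge hxy)
  rw [← h.eVariationOn_inter_Icc hx hy hxy]
  exact eVariationOn.edist_le f ⟨hx, le_rfl, hxy⟩ ⟨hy, hxy, le_rfl⟩

theorem HasUnitSpeedOn.ediam_le_eVariationOn (h : HasUnitSpeedOn f s) :
    Metric.ediam s ≤ eVariationOn f s := by
  refine Metric.ediam_le fun x hx y hy => ?_
  wlog hxy : x ≤ y generalizing x y
  · rw [edist_comm]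
    exact this y hy x hx (le_of_not_ge hxy)
  rw [← h.eVariationOn_inter_Icc hx hy hxy]
  exact eVariationOn.mono f inter_subset_left

end UnitSpeed

section NaturalParameterization

variable {E : Type*} [PseudoEMetricSpace E] {f : ℝ → E} {s : Set ℝ} {a : ℝ}

theorem eVariationOn_naturalParameterization (hf : LocallyBoundedVariationOn f s) (ha : a ∈ s) :
    eVariationOn (naturalParameterization f s a) (variationOnFromTo f s a '' s) =
      eVariationOn f s := by
  rw [← eVariationOn.comp_eq_of_monotoneOn _ _ (variationOnFromTo.monotoneOn hf ha)]
  exact eVariationOn.eq_of_edist_zero_on fun _ hx => edist_naturalParameterization_eq_zero hf ha hx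

theorem image_naturalParameterization {E : Type*} [EMetricSpace E] {f : ℝ → E}
    (hf : LocallyBoundedVariationOn f s) (ha : a ∈ s) :
    naturalParameterization f s a '' (variationOnFromTo f s a '' s) = f '' s := by
  rw [image_image]
  exact image_congr fun _ hx => edist_eq_zero.1 (edist_naturalParameterization_eq_zero hf ha hx)

end NaturalParameterization

section EMetric

variable {X : Type*} [EMetricSpace X] [MeasurableSpace X] [BorelSpace X]

theorem hausdorffMeasure_image_le_eVariationOn (f : ℝ → X) (s : Set ℝ) :
    μH[1] (f '' s) ≤ eVariationOn f s := by
  rcases eq_or_ne (eVariationOn f s) ⊤ with htop | hfin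
  · exact htop ▸ le_top
  rcases s.eq_empty_or_nonempty with rfl | ⟨a, ha⟩
  · simp
  have hf : LocallyBoundedVariationOn f s := BoundedVariationOn.locallyBoundedVariationOn hfin
  set t := variationOnFromTo f s a '' s
  have hg := has_unit_speed_naturalParameterization f hf ha
  calc μH[1] (f '' s) = μH[1] (naturalParameterization f s a '' t) := by
        rw [image_naturalParameterization hf ha]
    _ ≤ μH[1] t := by
        simpa using hg.lipschitzOnWith.hausdorffMeasure_image_le zero_le_one
    _ = volume t := by rw [hausdorffMeasure_real]
    _ ≤ Metric.ediam t := Real.volume_le_diam t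
    _ ≤ eVariationOn (naturalParameterization f s a) t := hg.ediam_le_eVariationOn
    _ = eVariationOn f s := eVariationOn_naturalParameterization hf ha

end EMetric

section Metric

variable {X : Type*} [MetricSpace X] [MeasurableSpace X] [BorelSpace X]

theorem IsPreconnected.edist_le_hausdorffMeasure {C : Set X} (hC : IsPreconnected C) {x y : X}
    (hx : x ∈ C) (hy : y ∈ C) : edist x y ≤ μH[1] C := by
  have hIcc : Icc 0 (dist x y) ⊆ dist x '' C :=
    (hC.image _ (continuous_const.dist continuous_id).continuousOn).ordConnected.out
      ⟨x, hx, dist_self x⟩ ⟨y, hy, rfl⟩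
  calc edist x y = volume (Icc 0 (dist x y)) := by rw [Real.volume_Icc, sub_zero, edist_dist]
    _ = μH[1] (Icc 0 (dist x y)) := by rw [hausdorffMeasure_real]
    _ ≤ μH[1] (dist x '' C) := measure_mono hIcc
    _ ≤ μH[1] C := by
        simpa using (LipschitzWith.dist_right x).hausdorffMeasure_image_le zero_le_one C

theorem eVariationOn_le_hausdorffMeasure_image {f : ℝ → X} {s : Set ℝ} (hs : s.OrdConnected)
    (hf : ContinuousOn f s) (hinj : InjOn f s) : eVariationOn f s ≤ μH[1] (f '' s) := by
  have := Measure.nullSingletonClass_hausdorff X one_pos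
  refine iSup_le fun ⟨n, u, hu, us⟩ => ?_
  set E : ℕ → Set X := fun i => f '' Icc (u i) (u (i + 1))
  have hIcc : ∀ i, Icc (u i) (u (i + 1)) ⊆ s := fun i => hs.out (us i) (us (i + 1))
  have hcont : ∀ i, ContinuousOn f (Icc (u i) (u (i + 1))) := fun i => hf.mono (hIcc i)
  have hE : ∀ i j, i < j → μH[1] (E i ∩ E j) = 0 := by
    intro i j hij
    have hsub : Icc (u i) (u (i + 1)) ∩ Icc (u j) (u (j + 1)) ⊆ {u (i + 1)} :=
      fun z hz => le_antisymm hz.1.2 ((hu hij).trans hz.2.1)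
    rw [← hinj.image_inter (hIcc i) (hIcc j)]
    exact measure_mono_null ((image_mono hsub).trans (image_singleton).subset)
      (measure_singleton _)
  have hdisj : (↑(Finset.range n) : Set ℕ).Pairwise (Function.onFun (AEDisjoint μH[1]) E) := by
    intro i _ j _ hij
    rcases hij.lt_or_gt with h | h
    exacts [hE i j h, AEDisjoint.symm (hE j i h)]
  calc ∑ i ∈ Finset.range n, edist (f (u (i + 1))) (f (u i))
      ≤ ∑ i ∈ Finset.range n, μH[1] (E i) := Finset.sum_le_sum fun i _ =>
        (isPreconnected_Icc.image f (hcont i)).edist_le_hausdorffMeasure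
          (mem_image_of_mem f (right_mem_Icc.2 (hu i.le_succ)))
          (mem_image_of_mem f (left_mem_Icc.2 (hu i.le_succ)))
    _ = μH[1] (⋃ i ∈ Finset.range n, E i) := (measure_biUnion_finset₀ hdisj fun i _ =>
        (isCompact_Icc.image_of_continuousOn (hcont i)).isClosed.nullMeasurableSet).symm
    _ ≤ μH[1] (f '' s) := measure_mono (iUnion₂_subset fun i _ => image_mono (hIcc i))

end Metric

theorem exists_lt_forall_le_of_mem {α : Type*} [LinearOrder α] [NoMinOrder α] {s : Set α}
    {x : α} (hx : x ∈ s) : ∃ a < x, ∃ p ∈ s, ∀ z ∈ s, a < z → p ≤ z := by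
  by_cases h : ∃ p ∈ s, p < x
  · obtain ⟨p, hp, hpx⟩ := h
    exact ⟨p, hpx, p, hp, fun z _ hz => hz.le⟩
  · push Not at h
    obtain ⟨a, ha⟩ := exists_lt x
    exact ⟨a, ha, x, hx, fun z hz _ => h z hz⟩

theorem exists_le_of_subset_closure {α : Type*} [LinearOrder α] [TopologicalSpace α]
    [OrderClosedTopology α] {S t : Set α} (hSt : S ⊆ closure t) {x : α} (hx : x ∈ S) :
    ∃ p, (p ∈ t ∨ IsLeast S p) ∧ p ≤ x := by
  by_cases hleast : IsLeast S x
  · exact ⟨x, Or.inr hleast, le_rfl⟩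
  obtain ⟨y, hy, hyx⟩ : ∃ y ∈ S, y < x := by
    simpa [IsLeast, hx, lowerBounds] using hleast
  obtain ⟨p, hpx, hp⟩ := mem_closure_iff.1 (hSt hy) (Iio x) isOpen_Iio hyx
  exact ⟨p, Or.inl hp, le_of_lt hpx⟩

theorem exists_countable_subset_forall_mem_Icc (S : Set ℝ) :
    ∃ T ⊆ S, T.Countable ∧ ∀ x ∈ S, ∃ p ∈ T, ∃ q ∈ T, x ∈ Icc p q := by
  obtain ⟨t, hts, htc, hSt⟩ :=
    (TopologicalSpace.IsSeparable.of_subtype S).exists_countable_dense_subset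
  refine ⟨t ∪ {x | IsLeast S x} ∪ {x | IsGreatest S x}, ?_, ?_, fun x hx => ?_⟩
  · rintro x ((hx | hx) | hx)
    exacts [hts hx, hx.1, hx.1]
  · refine (htc.union ?_).union ?_
    · exact Subsingleton.countable fun _ ha _ hb => ha.unique hb
    · exact Subsingleton.countable fun _ ha _ hb => ha.unique hb
  obtain ⟨p, hp, hpx⟩ := exists_le_of_subset_closure hSt hx
  obtain ⟨q, hq, hxq⟩ := exists_le_of_subset_closure (α := ℝᵒᵈ) hSt hx
  refine ⟨p, ?_, q, ?_, hpx, hxq⟩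
  · rcases hp with hp | hp
    exacts [Or.inl (Or.inl hp), Or.inl (Or.inr hp)]
  · rcases hq with hq | hq
    exacts [Or.inl (Or.inl hq), Or.inr hq]

theorem measure_image_eq_iSup_inter_Icc {α β : Type*} [LinearOrder α] [MeasurableSpace β]
    (μ : Measure β) (f : α → β) {T : Set α} (hT : T.Countable) {A : Set α}
    (hA : ∀ x ∈ A, ∃ p ∈ T, ∃ q ∈ T, x ∈ Icc p q) :
    μ (f '' A) = ⨆ i : T × T, μ (f '' (A ∩ Icc (i.1 : α) i.2)) := by
  have := hT.to_subtype
  have hcover : A = ⋃ i : T × T, A ∩ Icc (i.1 : α) i.2 := by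
    refine Subset.antisymm (fun x hx => ?_) (iUnion_subset fun i => inter_subset_left)
    obtain ⟨p, hp, q, hq, hxpq⟩ := hA x hx
    exact mem_iUnion.2 ⟨(⟨p, hp⟩, ⟨q, hq⟩), hx, hxpq⟩
  have hdir : Directed (· ⊆ ·) fun i : T × T => f '' (A ∩ Icc (i.1 : α) i.2) := by
    rintro ⟨p, q⟩ ⟨p', q'⟩
    refine ⟨(min p p', max q q'), ?_, ?_⟩ <;>
      refine image_mono (inter_subset_inter_right _ (Icc_subset_Icc ?_ ?_))
    exacts [Subtype.coe_le_coe.2 (min_le_left _ _), Subtype.coe_le_coe.2 (le_max_left _ _),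
      Subtype.coe_le_coe.2 (min_le_right _ _), Subtype.coe_le_coe.2 (le_max_right _ _)]
  conv_lhs => rw [hcover, image_iUnion]
  exact hdir.measure_iUnion

section SpeedMeasure

variable {X : Type*} [MetricSpace X] {γ : ℝ → X} {I : Set ℝ} {ν : Measure ℝ}

namespace IsSpeedMeasure

theorem measure_inter_eq (hν : IsSpeedMeasure γ I ν) {U : Set ℝ} (hU : IsOpen U)
    (hUI : (U ∩ I).OrdConnected) : ν (U ∩ I) = eVariationOn γ (U ∩ I) :=
  hν.2 _ inter_subset_right hUI ⟨U, hU, rfl⟩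

theorem exists_isOpen_Icc_subset_inter (hν : IsSpeedMeasure γ I ν) (hI : I.OrdConnected)
    (hγ : ∀ a ∈ I, ∀ b ∈ I, a ≤ b → eVariationOn γ (Icc a b) < ⊤) {p q : ℝ} (hp : p ∈ I)
    (hq : q ∈ I) :
    ∃ V, IsOpen V ∧ (V ∩ I).OrdConnected ∧ Icc p q ⊆ V ∩ I ∧ ν (V ∩ I) ≠ ⊤ := by
  obtain ⟨a, hap, p', hp', hp'le⟩ := exists_lt_forall_le_of_mem hp
  obtain ⟨b, hqb, q', hq', hleq'⟩ := exists_lt_forall_le_of_mem (α := ℝᵒᵈ) hq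
  have hVI : (Ioo a b ∩ I).OrdConnected := ordConnected_Ioo.inter hI
  have hsub : Ioo a b ∩ I ⊆ Icc (min p' q') q' := fun z hz =>
    ⟨(min_le_left _ _).trans (hp'le z hz.2 hz.1.1), hleq' z hz.2 hz.1.2⟩
  have hmin : min p' q' ∈ I := by
    rcases min_choice p' q' with h | h <;> rw [h] <;> assumption
  refine ⟨Ioo a b, isOpen_Ioo, hVI,
    fun z hz => ⟨⟨hap.trans_le hz.1, hz.2.trans_lt hqb⟩, hI.out hp hq hz⟩, ?_⟩
  rw [hν.measure_inter_eq isOpen_Ioo hVI]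
  exact ((eVariationOn.mono γ hsub).trans_lt (hγ _ hmin q' hq' (min_le_right _ _))).ne

variable [MeasurableSpace X] [BorelSpace X]

theorem hausdorffMeasure_image_inter_le (hν : IsSpeedMeasure γ I ν) (hI : I.OrdConnected)
    {U : Set ℝ} (hU : IsOpen U) : μH[1] (γ '' (U ∩ I)) ≤ ν (U ∩ I) := by
  set 𝒞 := connectedComponentIn U '' U
  have hopen : ∀ C ∈ 𝒞, IsOpen C := by
    rintro _ ⟨x, -, rfl⟩
    exact hU.connectedComponentIn
  have hord : ∀ C ∈ 𝒞, C.OrdConnected := by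
    rintro _ ⟨x, -, rfl⟩
    exact isPreconnected_connectedComponentIn.ordConnected
  have hdisj : 𝒞.PairwiseDisjoint id := by
    rintro _ ⟨x, -, rfl⟩ _ ⟨y, -, rfl⟩ hne
    refine disjoint_left.2 fun z hzx hzy => hne ?_
    rw [connectedComponentIn_eq hzx, connectedComponentIn_eq hzy]
  have hcount : 𝒞.Countable := hdisj.countable_of_isOpen hopen
    (by rintro _ ⟨x, hx, rfl⟩; exact ⟨x, mem_connectedComponentIn hx⟩)
  have hUI : U ∩ I = ⋃ C ∈ 𝒞, C ∩ I := by
    rw [← iUnion₂_inter]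
    congr 1
    refine (iUnion₂_subset fun C hC => ?_).antisymm' fun x hx => ?_
    · obtain ⟨x, -, rfl⟩ := hC
      exact connectedComponentIn_subset U x
    · exact mem_biUnion (mem_image_of_mem _ hx) (mem_connectedComponentIn hx)
  calc μH[1] (γ '' (U ∩ I)) ≤ ∑' C : 𝒞, μH[1] (γ '' (C ∩ I)) := by
        rw [hUI, image_iUnion₂]
        exact measure_biUnion_le _ hcount _
    _ ≤ ∑' C : 𝒞, ν (C ∩ I) := ENNReal.tsum_le_tsum fun C =>
        (hausdorffMeasure_image_le_eVariationOn γ _).trans_eq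
          (hν.measure_inter_eq (hopen C C.2) ((hord C C.2).inter hI)).symm
    _ = ν (U ∩ I) := by
        rw [hUI, measure_biUnion hcount (hdisj.mono fun C => inter_subset_left :
          𝒞.PairwiseDisjoint (· ∩ I))
          fun C hC => (hopen C hC).measurableSet.inter hI.measurableSet]

theorem hausdorffMeasure_image_le_of_subset (hν : IsSpeedMeasure γ I ν) (hI : I.OrdConnected)
    {V A : Set ℝ} (hV : IsOpen V) (hfin : ν (V ∩ I) ≠ ⊤) (hA : A ⊆ V ∩ I) :
    μH[1] (γ '' A) ≤ ν A := by
  have := isFiniteMeasure_restrict.2 hfin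
  calc μH[1] (γ '' A) ≤ ν.restrict (V ∩ I) A := by
        rw [Set.measure_eq_iInf_isOpen A]
        refine le_iInf₂ fun O hAO => le_iInf fun hO => ?_
        rw [Measure.restrict_apply hO.measurableSet, ← inter_assoc]
        exact (measure_mono (image_mono (show A ⊆ O ∩ V ∩ I from
          fun x hx => ⟨⟨hAO hx, (hA hx).1⟩, (hA hx).2⟩))).trans
          (hν.hausdorffMeasure_image_inter_le hI (hO.inter hV))
    _ ≤ ν A := Measure.restrict_apply_le _ _

theorem hausdorffMeasure_image_eq_of_subset (hν : IsSpeedMeasure γ I ν) (hI : I.OrdConnected)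
    (hcont : ContinuousOn γ I) (hinj : InjOn γ I) {V A : Set ℝ} (hV : IsOpen V)
    (hVI : (V ∩ I).OrdConnected) (hfin : ν (V ∩ I) ≠ ⊤) (hA : A ⊆ V ∩ I)
    (hAm : MeasurableSet A) : μH[1] (γ '' A) = ν A := by
  set J := V ∩ I
  have hJI : J ⊆ I := inter_subset_right
  have hle : ∀ {B}, B ⊆ J → μH[1] (γ '' B) ≤ ν B :=
    hν.hausdorffMeasure_image_le_of_subset hI hV hfin
  have hAm' : MeasurableSet (γ '' A) :=
    hAm.image_of_continuousOn_injOn (hcont.mono (hA.trans hJI)) (hinj.mono (hA.trans hJI))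
  refine le_antisymm (hle hA) (ENNReal.le_of_add_le_add_right
    (ne_top_of_le_ne_top hfin (measure_mono sdiff_subset : ν (J \ A) ≤ ν J)) ?_)
  calc ν A + ν (J \ A) = ν J := by
        rw [measure_add_sdiff hAm.nullMeasurableSet, union_eq_right.2 hA]
    _ = eVariationOn γ J := hν.measure_inter_eq hV hVI
    _ ≤ μH[1] (γ '' J) :=
        eVariationOn_le_hausdorffMeasure_image hVI (hcont.mono hJI) (hinj.mono hJI)
    _ = μH[1] (γ '' A) + μH[1] (γ '' (J \ A)) := by
        rw [(hinj.mono hJI).image_sdiff_subset hA, measure_add_sdiff hAm'.nullMeasurableSet,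
          union_eq_right.2 (image_mono hA)]
    _ ≤ μH[1] (γ '' A) + ν (J \ A) := by gcongr; exact hle sdiff_subset

theorem hausdorffMeasure_image_le (hν : IsSpeedMeasure γ I ν) (hI : I.OrdConnected)
    (hγ : ∀ a ∈ I, ∀ b ∈ I, a ≤ b → eVariationOn γ (Icc a b) < ⊤) {A : Set ℝ} (hA : A ⊆ I) :
    μH[1] (γ '' A) ≤ ν A := by
  obtain ⟨T, hTI, hTc, hcover⟩ := exists_countable_subset_forall_mem_Icc I
  rw [measure_image_eq_iSup_inter_Icc _ _ hTc fun x hx => hcover x (hA hx)]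
  refine iSup_le fun i => ?_
  obtain ⟨V, hV, -, hpq, hfin⟩ :=
    hν.exists_isOpen_Icc_subset_inter hI hγ (hTI i.1.2) (hTI i.2.2)
  exact (hν.hausdorffMeasure_image_le_of_subset hI hV hfin (inter_subset_right.trans hpq)).trans
    (measure_mono inter_subset_left)

theorem hausdorffMeasure_image_eq (hν : IsSpeedMeasure γ I ν) (hI : I.OrdConnected)
    (hcont : ContinuousOn γ I) (hγ : ∀ a ∈ I, ∀ b ∈ I, a ≤ b → eVariationOn γ (Icc a b) < ⊤)
    (hinj : InjOn γ I) {A : Set ℝ} (hA : A ⊆ I) (hAm : MeasurableSet A) :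
    μH[1] (γ '' A) = ν A := by
  obtain ⟨T, hTI, hTc, hcover⟩ := exists_countable_subset_forall_mem_Icc I
  have hAT : ∀ x ∈ A, ∃ p ∈ T, ∃ q ∈ T, x ∈ Icc p q := fun x hx => hcover x (hA hx)
  calc μH[1] (γ '' A) = ⨆ i : T × T, μH[1] (γ '' (A ∩ Icc (i.1 : ℝ) i.2)) :=
        measure_image_eq_iSup_inter_Icc _ _ hTc hAT
    _ = ⨆ i : T × T, ν (A ∩ Icc (i.1 : ℝ) i.2) := iSup_congr fun i => by
        obtain ⟨V, hV, hVI, hpq, hfin⟩ :=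
          hν.exists_isOpen_Icc_subset_inter hI hγ (hTI i.1.2) (hTI i.2.2)
        exact hν.hausdorffMeasure_image_eq_of_subset hI hcont hinj hV hVI hfin
          (inter_subset_right.trans hpq) (hAm.inter measurableSet_Icc)
    _ = ν A := by simpa using (measure_image_eq_iSup_inter_Icc ν id hTc hAT).symm

end IsSpeedMeasure

end SpeedMeasure

/-- For a continuous map `γ` of locally bounded variation with speed
measure `ν`, one has `H¹(γ(A)) ≤ ν(A)` for every Borel `A ⊆ I`, with equality for all
such `A` if `γ` is injective on `I`. -/
theorem hausdorff_le_speed_measure {X : Type*} [MetricSpace X]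
    [MeasurableSpace X] [BorelSpace X]
    (I : Set ℝ) (hI : I.OrdConnected) (γ : ℝ → X)
    (hcont : ContinuousOn γ I)
    (hγ : ∀ a ∈ I, ∀ b ∈ I, a ≤ b → eVariationOn γ (Set.Icc a b) < ⊤)
    (ν : Measure ℝ) (hν : IsSpeedMeasure γ I ν) :
    (∀ A : Set ℝ, A ⊆ I → MeasurableSet A → μH[1] (γ '' A) ≤ ν A) ∧
    (Set.InjOn γ I →
      ∀ A : Set ℝ, A ⊆ I → MeasurableSet A → μH[1] (γ '' A) = ν A) :=
  ⟨fun _ hA _ => hν.hausdorffMeasure_image_le hI hγ hA,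
    fun hinj _ hA hAm => hν.hausdorffMeasure_image_eq hI hcont hγ hinj hA hAm⟩
end

section
/- Let γ : I → X be locally of bounded variation. Then for Lebesgue-almost every t ∈ I the metric derivative |γ̇|(t) = lim_{ε→0} d(γ(t+ε),γ(t))/|ε| exists (the limit being taken over ε with t+ε ∈ I). -/
/-!
Let `V` be the variation function of `γ` and `f_r = d(γ(·), γ(r))` for rational `r`. Each `f_r`
has increments dominated by those of `V`, so `V ± f_r` are monotone, and the Lebesgue
decomposition of their Stieltjes measures gives `|f_r(s) - f_r(t)| ≤ ρ([t, s])` with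
`ρ = m · Leb + 2 σ`, where `m = sup_r |f_r'|` and `σ` is the singular part of the Stieltjes
measure of `V`. At almost every `t` the density of `ρ` is `m(t)`, all `f_r` are differentiable
and `V` is continuous. The triangle inequality through `γ(r)` with `r → t` then bounds
`d(γ(s), γ(t)) / |s - t|` above by `ρ([t, s]) / |s - t| → m(t)`, while each `|f_r'(t)|` bounds
it from below, so the quotient tends to `m(t)`.

On `I`, the curve agrees near almost every point with its composition with the projection onto
a rational interval contained in `I`, since the frontier of an interval is null.
-/

open Filter Topology Set MeasureTheory Function
open scoped ENNReal

namespace Monotone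

variable {F G H : ℝ → ℝ}

theorem leftLim_stieltjesFunction_le (hF : Monotone F) (t : ℝ) :
    leftLim hF.stieltjesFunction t ≤ F t :=
  _root_.le_of_tendsto (hF.stieltjesFunction.mono.tendsto_leftLim t) <| by
    filter_upwards [self_mem_nhdsWithin] with u (hu : u < t) using hF.rightLim_le hu

theorem ofReal_sub_le_measure_Icc (hF : Monotone F) {t s : ℝ} :
    ENNReal.ofReal (F s - F t) ≤ hF.stieltjesFunction.measure (Icc t s) := by
  rw [StieltjesFunction.measure_Icc]
  gcongr
  exacts [hF.le_rightLim le_rfl, hF.leftLim_stieltjesFunction_le t]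

theorem measure_Ioo_le_ofReal_sub (hF : Monotone F) {t s : ℝ} :
    hF.stieltjesFunction.measure (Ioo t s) ≤ ENNReal.ofReal (F s - F t) := by
  rw [StieltjesFunction.measure_Ioo]
  gcongr
  exacts [hF.leftLim_stieltjesFunction_le s, hF.le_rightLim le_rfl]

theorem setLIntegral_rnDeriv_Icc_le (hF : Monotone F) (t s : ℝ) :
    ∫⁻ x in Icc t s, hF.stieltjesFunction.measure.rnDeriv volume x ≤
      ENNReal.ofReal (F s - F t) :=
  calc ∫⁻ x in Icc t s, hF.stieltjesFunction.measure.rnDeriv volume x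
      = ∫⁻ x in Ioo t s, hF.stieltjesFunction.measure.rnDeriv volume x :=
        setLIntegral_congr Ioo_ae_eq_Icc.symm
    _ ≤ hF.stieltjesFunction.measure (Ioo t s) := Measure.setLIntegral_rnDeriv_le _
    _ ≤ ENNReal.ofReal (F s - F t) := hF.measure_Ioo_le_ofReal_sub

theorem rightLim_add (hF : Monotone F) (hG : Monotone G) (x : ℝ) :
    rightLim (F + G) x = rightLim F x + rightLim G x :=
  tendsto_nhds_unique ((hF.add hG).tendsto_rightLim x)
    ((hF.tendsto_rightLim x).add (hG.tendsto_rightLim x))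

theorem stieltjesFunction_measure_add (hF : Monotone F) (hG : Monotone G) (hH : Monotone H)
    (h : F + G = H) :
    hF.stieltjesFunction.measure + hG.stieltjesFunction.measure =
      hH.stieltjesFunction.measure := by
  subst h
  rw [← StieltjesFunction.measure_add]
  congr 1
  ext x
  exact (hF.rightLim_add hG x).symm

theorem ae_rnDeriv_eq_ofReal_deriv (hF : Monotone F) :
    ∀ᵐ x, hF.stieltjesFunction.measure.rnDeriv volume x = ENNReal.ofReal (deriv F x) := by
  filter_upwards [hF.ae_hasDerivAt, Measure.rnDeriv_lt_top hF.stieltjesFunction.measure volume]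
    with x hderiv hfin
  rw [hderiv.deriv, ENNReal.ofReal_toReal hfin.ne]

end Monotone

theorem ENNReal.ofReal_le_of_ofReal_add_le {a b : ℝ} {c : ℝ≥0∞} (hb : 0 ≤ b)
    (h : ENNReal.ofReal (a + b) ≤ c + ENNReal.ofReal b) : ENNReal.ofReal a ≤ c :=
  calc ENNReal.ofReal a = ENNReal.ofReal (a + b) - ENNReal.ofReal b := by
        rw [← ENNReal.ofReal_sub _ hb, add_sub_cancel_right]
    _ ≤ c := tsub_le_iff_right.2 h

section DominatedIncrements

variable {f V : ℝ → ℝ}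

theorem monotone_add_of_abs_sub_le (hfV : ∀ ⦃u v⦄, u ≤ v → |f v - f u| ≤ V v - V u) :
    Monotone (V + f) := fun u v huv => by
  simp only [Pi.add_apply]
  linarith [neg_abs_le (f v - f u), hfV huv]

theorem abs_neg_sub_le_of_abs_sub_le (hfV : ∀ ⦃u v⦄, u ≤ v → |f v - f u| ≤ V v - V u) :
    ∀ ⦃u v⦄, u ≤ v → |(-f) v - (-f) u| ≤ V v - V u := fun u v huv => by
  simpa only [Pi.neg_apply, neg_sub_neg, abs_sub_comm] using hfV huv

theorem ae_differentiableAt_of_abs_sub_le (hV : Monotone V)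
    (hfV : ∀ ⦃u v⦄, u ≤ v → |f v - f u| ≤ V v - V u) : ∀ᵐ x, DifferentiableAt ℝ f x := by
  filter_upwards [(monotone_add_of_abs_sub_le hfV).ae_differentiableAt, hV.ae_differentiableAt]
    with x hVf hV
  simpa using hVf.sub hV

theorem abs_deriv_le_deriv_of_abs_sub_le (hfV : ∀ ⦃u v⦄, u ≤ v → |f v - f u| ≤ V v - V u)
    {x : ℝ} (hf : DifferentiableAt ℝ f x) (hV : DifferentiableAt ℝ V x) :
    |deriv f x| ≤ deriv V x := by
  have hadd := (monotone_add_of_abs_sub_le hfV).deriv_nonneg (x := x)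
  have hsub := (monotone_add_of_abs_sub_le (abs_neg_sub_le_of_abs_sub_le hfV)).deriv_nonneg (x := x)
  rw [deriv_add hV hf] at hadd
  rw [deriv_add hV hf.neg, deriv.neg] at hsub
  exact abs_le.2 ⟨by linarith, by linarith⟩

theorem ofReal_sub_le_of_abs_sub_le (hV : Monotone V)
    (hfV : ∀ ⦃u v⦄, u ≤ v → |f v - f u| ≤ V v - V u) {t s : ℝ} (hts : t ≤ s) :
    ENNReal.ofReal (f s - f t) ≤ (∫⁻ x in Icc t s, ENNReal.ofReal |deriv f x|) +
      2 * hV.stieltjesFunction.measure.singularPart volume (Icc t s) := by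
  set μ := hV.stieltjesFunction.measure
  have hF := monotone_add_of_abs_sub_le hfV
  have hG := monotone_add_of_abs_sub_le (abs_neg_sub_le_of_abs_sub_le hfV)
  set μF := hF.stieltjesFunction.measure
  have hsing : μF.singularPart volume (Icc t s) ≤ 2 * μ.singularPart volume (Icc t s) := by
    have hsum : μF + hG.stieltjesFunction.measure = μ + μ :=
      (hF.stieltjesFunction_measure_add hG (hV.add hV)
        (by rw [add_add_add_comm, add_neg_cancel, add_zero]; rfl)).trans
        (hV.stieltjesFunction_measure_add hV (hV.add hV) rfl).symm
    have := congrArg (fun ν : Measure ℝ => ν.singularPart volume (Icc t s)) hsum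
    simp only [Measure.singularPart_add, Measure.add_apply] at this
    rw [two_mul, ← this]
    exact le_self_add
  have hrnDeriv : ∀ᵐ x, μF.rnDeriv volume x ≤ μ.rnDeriv volume x + ENNReal.ofReal |deriv f x| := by
    filter_upwards [hF.ae_rnDeriv_eq_ofReal_deriv, hV.ae_rnDeriv_eq_ofReal_deriv,
      hV.ae_differentiableAt, ae_differentiableAt_of_abs_sub_le hV hfV] with x hFx hVx hV' hf'
    rw [hFx, hVx, deriv_add hV' hf']
    refine ENNReal.ofReal_add_le.trans ?_
    gcongr
    exact le_abs_self _
  refine ENNReal.ofReal_le_of_ofReal_add_le (sub_nonneg.2 (hV hts)) ?_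
  calc ENNReal.ofReal (f s - f t + (V s - V t))
      ≤ μF (Icc t s) := by
        convert hF.ofReal_sub_le_measure_Icc (t := t) (s := s) using 2
        simp only [Pi.add_apply]; ring
    _ = μF.singularPart volume (Icc t s) + ∫⁻ x in Icc t s, μF.rnDeriv volume x := by
        conv_lhs => rw [μF.haveLebesgueDecomposition_add volume]
        rw [Measure.add_apply, withDensity_apply _ measurableSet_Icc]
    _ ≤ 2 * μ.singularPart volume (Icc t s) + ((∫⁻ x in Icc t s, μ.rnDeriv volume x) +
          ∫⁻ x in Icc t s, ENNReal.ofReal |deriv f x|) := by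
        gcongr
        rw [← lintegral_add_left (Measure.measurable_rnDeriv _ _)]
        exact lintegral_mono_ae (ae_restrict_of_ae hrnDeriv)
    _ ≤ 2 * μ.singularPart volume (Icc t s) + (ENNReal.ofReal (V s - V t) +
          ∫⁻ x in Icc t s, ENNReal.ofReal |deriv f x|) := by
        gcongr
        exact hV.setLIntegral_rnDeriv_Icc_le t s
    _ = _ := by ring

theorem ofReal_abs_sub_le_of_abs_sub_le (hV : Monotone V)
    (hfV : ∀ ⦃u v⦄, u ≤ v → |f v - f u| ≤ V v - V u) (t s : ℝ) :
    ENNReal.ofReal |f s - f t| ≤ (∫⁻ x in uIcc t s, ENNReal.ofReal |deriv f x|) +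
      2 * hV.stieltjesFunction.measure.singularPart volume (uIcc t s) := by
  wlog hts : t ≤ s generalizing t s
  · rw [abs_sub_comm, uIcc_comm]
    exact this s t (le_of_not_ge hts)
  rw [uIcc_of_le hts, abs_eq_max_neg, ENNReal.ofReal_max, neg_sub]
  refine max_le (ofReal_sub_le_of_abs_sub_le hV hfV hts) ?_
  simpa only [Pi.neg_apply, neg_sub_neg, deriv.neg', abs_neg] using
    ofReal_sub_le_of_abs_sub_le hV (abs_neg_sub_le_of_abs_sub_le hfV) hts

end DominatedIncrements

theorem variationOnFromTo.dist_le_sub_of_le {α E : Type*} [LinearOrder α] [PseudoMetricSpace E]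
    {f : α → E} {s : Set α} (hf : LocallyBoundedVariationOn f s) {a b c : α} (ha : a ∈ s)
    (hb : b ∈ s) (hc : c ∈ s) (hbc : b ≤ c) :
    dist (f b) (f c) ≤ variationOnFromTo f s a c - variationOnFromTo f s a b := by
  rw [variationOnFromTo.sub_right hf ha hc hb, variationOnFromTo.eq_of_le f s hbc, dist_edist]
  exact ENNReal.toReal_mono (hf b c hb hc)
    (eVariationOn.edist_le f ⟨hb, le_rfl, hbc⟩ ⟨hc, hbc, le_rfl⟩)

namespace MeasureTheory.Measure

instance isLocallyFiniteMeasure_add {α : Type*} [TopologicalSpace α] [MeasurableSpace α]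
    (μ ν : Measure α) [IsLocallyFiniteMeasure μ] [IsLocallyFiniteMeasure ν] :
    IsLocallyFiniteMeasure (μ + ν) := by
  refine ⟨fun x => ?_⟩
  obtain ⟨U, hU, hμU⟩ := μ.finiteAt_nhds x
  obtain ⟨W, hW, hνW⟩ := ν.finiteAt_nhds x
  refine ⟨U ∩ W, inter_mem hU hW, ?_⟩
  rw [Measure.add_apply]
  exact ENNReal.add_lt_top.2 ⟨(measure_mono inter_subset_left).trans_lt hμU,
    (measure_mono inter_subset_right).trans_lt hνW⟩

theorem ae_tendsto_measure_uIcc_div (μ : Measure ℝ) [IsLocallyFiniteMeasure μ] :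
    ∀ᵐ t, Tendsto (fun s => (μ (uIcc t s)).toReal / |s - t|) (𝓝[≠] t)
      (𝓝 (μ.rnDeriv volume t).toReal) := by
  filter_upwards [(IsUnifLocDoublingMeasure.vitaliFamily volume 1).ae_tendsto_rnDeriv μ,
    μ.rnDeriv_lt_top volume] with t ht hfin
  have h := (ENNReal.tendsto_toReal hfin.ne).comp ht
  rw [← nhdsLT_sup_nhdsGT, tendsto_sup]
  constructor
  · refine (h.comp (Real.tendsto_Icc_vitaliFamily_left t)).congr' ?_
    filter_upwards [self_mem_nhdsWithin] with s (hs : s < t)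
    rw [comp_apply, comp_apply, Real.volume_Icc, ENNReal.toReal_div, uIcc_of_ge hs.le,
      ENNReal.toReal_ofReal (by linarith), abs_of_neg (by linarith), neg_sub]
  · refine (h.comp (Real.tendsto_Icc_vitaliFamily_right t)).congr' ?_
    filter_upwards [self_mem_nhdsWithin] with s (hs : t < s)
    rw [comp_apply, comp_apply, Real.volume_Icc, ENNReal.toReal_div, uIcc_of_le hs.le,
      ENNReal.toReal_ofReal (by linarith), abs_of_pos (by linarith)]

end MeasureTheory.Measure

section MetricDerivative

variable {X : Type*} [PseudoMetricSpace X] {γ : ℝ → X} {V : ℝ → ℝ}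

theorem continuousAt_of_dist_le_sub (hVγ : ∀ ⦃u v⦄, u ≤ v → dist (γ u) (γ v) ≤ V v - V u)
    {t : ℝ} (hVt : ContinuousAt V t) : ContinuousAt γ t := by
  rw [Metric.continuousAt_iff] at hVt ⊢
  refine fun ε hε => (hVt ε hε).imp fun δ ⟨hδ, hVδ⟩ => ⟨hδ, fun u hu => ?_⟩
  refine lt_of_le_of_lt ?_ (hVδ hu)
  rw [Real.dist_eq]
  rcases le_total u t with hut | htu
  · exact (hVγ hut).trans (neg_sub (V u) (V t) ▸ neg_le_abs _)
  · exact dist_comm (γ u) _ ▸ (hVγ htu).trans (le_abs_self _)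

theorem dist_le_toReal_measure_uIcc {ρ : Measure ℝ} [IsLocallyFiniteMeasure ρ] {t : ℝ}
    (hγt : ContinuousAt γ t)
    (hρ : ∀ (r : ℚ) (s : ℝ), ENNReal.ofReal |dist (γ s) (γ r) - dist (γ t) (γ r)| ≤ ρ (uIcc t s))
    (s : ℝ) : dist (γ s) (γ t) ≤ (ρ (uIcc t s)).toReal := by
  refine le_of_forall_pos_le_add fun ε hε => ?_
  obtain ⟨δ, hδ, hγδ⟩ := Metric.continuousAt_iff.1 hγt (ε / 2) (half_pos hε)
  obtain ⟨r, hr⟩ := Rat.denseRange_cast.exists_dist_lt t hδ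
  have hγr : dist (γ t) (γ r) < ε / 2 := dist_comm (γ t) _ ▸ hγδ (dist_comm t _ ▸ hr)
  have hρs := (ENNReal.ofReal_le_iff_le_toReal isCompact_uIcc.measure_lt_top.ne).1 (hρ r s)
  calc dist (γ s) (γ t) ≤ dist (γ s) (γ r) + dist (γ t) (γ r) := dist_triangle_right _ _ _
    _ ≤ |dist (γ s) (γ r) - dist (γ t) (γ r)| + 2 * dist (γ t) (γ r) := by
        linarith [le_abs_self (dist (γ s) (γ r) - dist (γ t) (γ r))]
    _ ≤ (ρ (uIcc t s)).toReal + ε := by linarith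

theorem eventually_lt_dist_div_of_hasDerivAt {t a D : ℝ} {x : X}
    (hD : HasDerivAt (fun u => dist (γ u) x) D t) (ha : a < |D|) :
    ∀ᶠ s in 𝓝[≠] t, a < dist (γ s) (γ t) / |s - t| := by
  filter_upwards [(hasDerivAt_iff_tendsto_slope.1 hD).abs.eventually (lt_mem_nhds ha)] with s hs
  refine hs.trans_le ?_
  rw [slope_def_field, abs_div]
  gcongr
  exact abs_dist_sub_le _ _ _

theorem tendsto_dist_div_of_hasDerivAt {ι : Type*} {x : ι → X} {D : ι → ℝ} {t : ℝ}
    {ρ : Measure ℝ} (hle : ∀ s, dist (γ s) (γ t) ≤ (ρ (uIcc t s)).toReal)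
    (hρ : Tendsto (fun s => (ρ (uIcc t s)).toReal / |s - t|) (𝓝[≠] t)
      (𝓝 (⨆ i, ENNReal.ofReal |D i|).toReal))
    (hD : ∀ i, HasDerivAt (fun u => dist (γ u) (x i)) (D i) t) :
    Tendsto (fun s => dist (γ s) (γ t) / |s - t|) (𝓝[≠] t)
      (𝓝 (⨆ i, ENNReal.ofReal |D i|).toReal) := by
  refine tendsto_order.2 ⟨fun a ha => ?_, fun a ha => ?_⟩
  · rcases lt_or_ge a 0 with ha0 | ha0
    · exact Eventually.of_forall fun s => ha0.trans_le (by positivity)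
    have hsup : ENNReal.ofReal a < ⨆ i, ENNReal.ofReal |D i| := by
      refine (ENNReal.ofReal_lt_iff_lt_toReal ha0 fun htop => ?_).2 ha
      rw [htop, ENNReal.toReal_top] at ha
      exact ha0.not_gt ha
    obtain ⟨i, hi⟩ := lt_iSup_iff.1 hsup
    exact eventually_lt_dist_div_of_hasDerivAt (hD i)
      ((ENNReal.ofReal_lt_ofReal_iff_of_nonneg ha0).1 hi)
  · filter_upwards [hρ.eventually (gt_mem_nhds ha)] with s hs
    exact (div_le_div_of_nonneg_right (hle s) (abs_nonneg _)).trans_lt hs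

theorem LocallyBoundedVariationOn.ae_exists_tendsto_dist_div
    (hγ : LocallyBoundedVariationOn γ univ) :
    ∀ᵐ t, ∃ L, Tendsto (fun s => dist (γ s) (γ t) / |s - t|) (𝓝[≠] t) (𝓝 L) := by
  set V := variationOnFromTo γ univ 0
  have hVγ : ∀ ⦃u v⦄, u ≤ v → dist (γ u) (γ v) ≤ V v - V u := fun u v huv =>
    variationOnFromTo.dist_le_sub_of_le hγ (mem_univ _) (mem_univ _) (mem_univ _) huv
  have hV : Monotone V := fun u v huv => sub_nonneg.1 (dist_nonneg.trans (hVγ huv))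
  set f : ℚ → ℝ → ℝ := fun r u => dist (γ u) (γ r)
  have hf : ∀ r ⦃u v⦄, u ≤ v → |f r v - f r u| ≤ V v - V u := fun r u v huv =>
    (abs_dist_sub_le _ _ _).trans (dist_comm (γ u) (γ v) ▸ hVγ huv)
  set M : ℝ → ℝ≥0∞ := fun x => ⨆ r, ENNReal.ofReal |deriv (f r) x|
  have hM : Measurable M := Measurable.iSup fun r => (measurable_deriv _).abs.ennreal_ofReal
  set σ := hV.stieltjesFunction.measure.singularPart volume
  have hMV : volume.withDensity M ≤ hV.stieltjesFunction.measure := by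
    refine (withDensity_mono ?_).trans (Measure.withDensity_rnDeriv_le _ _)
    filter_upwards [hV.ae_rnDeriv_eq_ofReal_deriv, hV.ae_differentiableAt,
      ae_all_iff.2 fun r => ae_differentiableAt_of_abs_sub_le hV (hf r)] with x hx hVx hfx
    rw [hx]
    exact iSup_le fun r =>
      ENNReal.ofReal_le_ofReal (abs_deriv_le_deriv_of_abs_sub_le (hf r) (hfx r) hVx)
  have := Measure.isLocallyFiniteMeasure_of_le hMV
  set ρ := volume.withDensity M + (σ + σ)
  have hρ : ∀ (r : ℚ) (t s : ℝ), ENNReal.ofReal |f r s - f r t| ≤ ρ (uIcc t s) := by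
    intro r t s
    refine (ofReal_abs_sub_le_of_abs_sub_le hV (hf r) t s).trans ?_
    rw [Measure.add_apply, Measure.add_apply, withDensity_apply _ measurableSet_uIcc, ← two_mul]
    gcongr with x
    exact le_iSup (fun r => ENNReal.ofReal |deriv (f r) x|) r
  have hρM : ρ.rnDeriv volume =ᵐ[volume] M :=
    (Measure.eq_rnDeriv hM ((Measure.mutuallySingular_singularPart _ _).add_left
      (Measure.mutuallySingular_singularPart _ _)) (add_comm _ _)).symm
  filter_upwards [ae_all_iff.2 fun r => ae_differentiableAt_of_abs_sub_le hV (hf r),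
    hV.countable_not_continuousAt.ae_notMem volume, ρ.ae_tendsto_measure_uIcc_div, hρM]
    with t hft hVt hdens hρt
  rw [hρt] at hdens
  exact ⟨_, tendsto_dist_div_of_hasDerivAt
    (dist_le_toReal_measure_uIcc (continuousAt_of_dist_le_sub hVγ (not_not.1 hVt))
      fun r s => hρ r t s) hdens fun r => (hft r).hasDerivAt⟩

theorem BoundedVariationOn.ae_exists_tendsto_dist_div_of_mem_Ioo {a b : ℝ}
    (hγ : BoundedVariationOn γ (Icc a b)) :
    ∀ᵐ t, t ∈ Ioo a b → ∃ L, Tendsto (fun s => dist (γ s) (γ t) / |s - t|) (𝓝[≠] t) (𝓝 L) := by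
  rcases lt_or_ge a b with hab | hba
  swap
  · exact Eventually.of_forall fun t ht => absurd (ht.1.trans ht.2) hba.not_gt
  set π : ℝ → ℝ := fun u => projIcc a b hab.le u
  have hπ : Monotone π := fun u v huv => monotone_projIcc hab.le huv
  have hγπ : LocallyBoundedVariationOn (γ ∘ π) univ :=
    BoundedVariationOn.locallyBoundedVariationOn <| ne_top_of_le_ne_top hγ <|
      eVariationOn.comp_le_of_monotoneOn γ π (hπ.monotoneOn univ) fun u _ =>
        (projIcc a b hab.le u).2
  filter_upwards [hγπ.ae_exists_tendsto_dist_div] with t ⟨L, hL⟩ ht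
  have hπt : π =ᶠ[𝓝 t] id := by
    filter_upwards [Icc_mem_nhds ht.1 ht.2] with u hu
    exact congrArg Subtype.val (projIcc_of_mem _ hu)
  refine ⟨L, hL.congr' ?_⟩
  filter_upwards [nhdsWithin_le_nhds hπt] with s hs
  simp only [comp_apply, hs, hπt.eq_of_nhds, id]

end MetricDerivative

/-- For `γ : I → X` locally of bounded variation, the metric derivative
`|γ̇|(t) = lim_{ε→0} d(γ(t+ε),γ(t))/|ε|` (limit over points `s = t+ε ∈ I`, `s ≠ t`)
exists for Lebesgue-almost every `t ∈ I`. -/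
theorem metric_derivative_exists_ae {X : Type*} [MetricSpace X]
    (I : Set ℝ) (hI : I.OrdConnected) (γ : ℝ → X)
    (hγ : ∀ a ∈ I, ∀ b ∈ I, a ≤ b → eVariationOn γ (Set.Icc a b) < ⊤) :
    ∀ᵐ t ∂(volume.restrict I),
      ∃ L : ℝ, Tendsto (fun s => dist (γ s) (γ t) / |s - t|) (𝓝[I \ {t}] t) (𝓝 L) := by
  have hfrontier : ∀ᵐ t, t ∉ frontier I :=
    measure_eq_zero_iff_ae_notMem.1 (hI.convex.addHaar_frontier volume)
  have hIoo : ∀ᵐ t, ∀ p q : ℚ, Icc (p : ℝ) q ⊆ I → t ∈ Ioo (p : ℝ) q →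
      ∃ L, Tendsto (fun s => dist (γ s) (γ t) / |s - t|) (𝓝[≠] t) (𝓝 L) := by
    refine ae_all_iff.2 fun p => ae_all_iff.2 fun q => ?_
    by_cases hpq : (p : ℝ) ≤ q ∧ Icc (p : ℝ) q ⊆ I
    · obtain ⟨hpq, hsub⟩ := hpq
      have hbv : BoundedVariationOn γ (Icc (p : ℝ) q) :=
        (hγ p (hsub ⟨le_rfl, hpq⟩) q (hsub ⟨hpq, le_rfl⟩) hpq).ne
      filter_upwards [hbv.ae_exists_tendsto_dist_div_of_mem_Ioo] with t ht _ using ht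
    · exact Eventually.of_forall fun t hsub ht => (hpq ⟨(ht.1.trans ht.2).le, hsub⟩).elim
  rw [ae_restrict_iff' hI.measurableSet]
  filter_upwards [hfrontier, hIoo] with t htfrontier hlocal htI
  obtain ⟨l, u, ⟨hlt, htu⟩, hlu⟩ := mem_nhds_iff_exists_Ioo_subset.1 <|
    mem_interior_iff_mem_nhds.1 (self_sdiff_frontier I ▸ mem_sdiff_of_mem htI htfrontier)
  obtain ⟨p, hlp, hpt⟩ := exists_rat_btwn hlt
  obtain ⟨q, htq, hqu⟩ := exists_rat_btwn htu
  obtain ⟨L, hL⟩ := hlocal p q ((Icc_subset_Ioo hlp hqu).trans hlu) ⟨hpt, htq⟩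
  exact ⟨L, hL.mono_left (nhdsWithin_mono _ (sdiff_subset_compl I {t}))⟩
end

section
/- Let γ : I → X be locally of bounded variation. Then for Lebesgue-almost every t ∈ I, either liminf_{ε→0} Var(γ;[t∧(t+ε), t∨(t+ε)])/|ε| = 0, or lim_{ε→0} d(γ(t+ε),γ(t)) / Var(γ;[t∧(t+ε), t∨(t+ε)]) = 1 (limits over ε with t+ε ∈ I). -/
/-!
Let `V` be the variation function of `γ` and `x` a dense sequence in its range. Each
`fₙ = dist (γ ·) (x n)` is dominated by `V`, so `V ± fₙ` are monotone, and the Lebesgue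
decomposition of their Stieltjes measures gives `|fₙ b - fₙ a| ≤ ∫_[a,b] |fₙ'| + σ [a,b]`, with
`σ` the singular part of the Stieltjes measure of `V`. As `d(γ a, γ b) = supₙ |fₙ b - fₙ a|`,
summing over partitions gives `Var(γ; [a,b]) ≤ ∫_[a,b] m + 2 σ [a,b]` with `m = supₙ |fₙ'|`, and
differentiating this measure yields `V' ≤ m` almost everywhere. Where moreover `V'(t) = L > 0`,
`|fₙ s - fₙ t| ≤ d(γ s, γ t) ≤ |V s - V t|` squeezes `d(γ s, γ t) / |s - t|` to `L`, hence
`d(γ s, γ t) / Var(γ; [t, s]) → 1`; where `L = 0`, `Var(γ; [t, s]) / |s - t| → 0`.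
On a general interval `I` the argument is run on rational subintervals, with `γ` frozen outside
them; the frontier of `I` is null.
-/

open Filter Topology Set MeasureTheory
open scoped ENNReal NNReal

theorem eVariationOn_Icc_le_of_edist_le_Ico_add_Ioc {E : Type*} [PseudoEMetricSpace E] {γ : ℝ → E}
    {μ ν : Measure ℝ} (h : ∀ a b, a < b → edist (γ a) (γ b) ≤ μ (Ico a b) + ν (Ioc a b))
    (u v : ℝ) : eVariationOn γ (Icc u v) ≤ μ (Icc u v) + ν (Icc u v) := by
  refine iSup_le fun ⟨N, w, hw, hwuv⟩ => ?_
  have sum_le : ∀ (κ : Measure ℝ) (s : ℕ → Set ℝ), Pairwise (Function.onFun Disjoint s) →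
      (∀ i, MeasurableSet (s i)) → (∀ i, s i ⊆ Icc (w i) (w (i + 1))) →
      ∑ i ∈ Finset.range N, κ (s i) ≤ κ (Icc u v) := by
    intro κ s hd hm hs
    rw [← measure_biUnion_finset (fun i _ j _ hij => hd hij) fun i _ => hm i]
    exact measure_mono <| iUnion₂_subset fun i _ =>
      (hs i).trans (Icc_subset_Icc (hwuv i).1 (hwuv (i + 1)).2)
  have step : ∀ i, edist (γ (w (i + 1))) (γ (w i))
      ≤ μ (Ico (w i) (w (i + 1))) + ν (Ioc (w i) (w (i + 1))) := by
    intro i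
    rcases (hw i.le_succ).lt_or_eq with hlt | heq
    · rw [edist_comm]; exact h _ _ hlt
    · simp [heq]
  calc ∑ i ∈ Finset.range N, edist (γ (w (i + 1))) (γ (w i))
      ≤ ∑ i ∈ Finset.range N, (μ (Ico (w i) (w (i + 1))) + ν (Ioc (w i) (w (i + 1)))) :=
        Finset.sum_le_sum fun i _ => step i
    _ = ∑ i ∈ Finset.range N, μ (Ico (w i) (w (i + 1)))
        + ∑ i ∈ Finset.range N, ν (Ioc (w i) (w (i + 1))) := Finset.sum_add_distrib
    _ ≤ μ (Icc u v) + ν (Icc u v) :=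
        add_le_add (sum_le μ _ hw.pairwise_disjoint_on_Ico_succ (fun _ => measurableSet_Ico)
          fun _ => Ico_subset_Icc_self)
          (sum_le ν _ hw.pairwise_disjoint_on_Ioc_succ (fun _ => measurableSet_Ioc)
          fun _ => Ioc_subset_Icc_self)

theorem ENNReal.tsub_le_ofReal_abs_toReal_sub {a b : ℝ≥0∞} (ha : a ≠ ∞) (hb : b ≠ ∞) :
    a - b ≤ ENNReal.ofReal |a.toReal - b.toReal| := by
  rw [← ENNReal.ofReal_toReal ha, ← ENNReal.ofReal_toReal hb,
    ← ENNReal.ofReal_sub _ ENNReal.toReal_nonneg, ENNReal.toReal_ofReal ENNReal.toReal_nonneg,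
    ENNReal.toReal_ofReal ENNReal.toReal_nonneg]
  exact ENNReal.ofReal_le_ofReal (le_abs_self _)

theorem HasDerivAt.tendsto_abs_sub_div_abs_sub {f : ℝ → ℝ} {f' t : ℝ} (hf : HasDerivAt f f' t) :
    Tendsto (fun s => |f s - f t| / |s - t|) (𝓝[≠] t) (𝓝 |f'|) := by
  refine ((continuous_abs.tendsto _).comp (hasDerivAt_iff_tendsto_slope.1 hf)).congr fun s => ?_
  rw [Function.comp_apply, slope_def_field, abs_div]

theorem abs_deriv_le_of_abs_sub_le {f V : ℝ → ℝ} {L t : ℝ} (hV : HasDerivAt V L t)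
    (h : ∀ s, |f s - f t| ≤ |V s - V t|) : |deriv f t| ≤ |L| := by
  by_cases hf : DifferentiableAt ℝ f t
  · refine le_of_tendsto_of_tendsto' hf.hasDerivAt.tendsto_abs_sub_div_abs_sub
      hV.tendsto_abs_sub_div_abs_sub fun s => ?_
    exact div_le_div_of_nonneg_right (h s) (abs_nonneg _)
  · rw [deriv_zero_of_not_differentiableAt hf, abs_zero]
    exact abs_nonneg L

namespace Monotone

variable {P Q : ℝ → ℝ} {a b : ℝ}

theorem leftLim_stieltjesFunction_le_s16 (hP : Monotone P) (a : ℝ) :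
    Function.leftLim hP.stieltjesFunction a ≤ P a := by
  refine _root_.le_of_tendsto (hP.stieltjesFunction.mono.tendsto_leftLim a) ?_
  filter_upwards [self_mem_nhdsWithin] with y (hy : y < a) using hP.rightLim_le hy

theorem ofReal_sub_le_measure_Icc_s16 (hP : Monotone P) :
    ENNReal.ofReal (P b - P a) ≤ hP.stieltjesFunction.measure (Icc a b) := by
  rw [StieltjesFunction.measure_Icc]
  exact ENNReal.ofReal_le_ofReal
    (sub_le_sub (hP.le_rightLim le_rfl) (hP.leftLim_stieltjesFunction_le_s16 a))

theorem measure_Ioo_le_ofReal_sub_s16 (hP : Monotone P) :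
    hP.stieltjesFunction.measure (Ioo a b) ≤ ENNReal.ofReal (P b - P a) := by
  rw [StieltjesFunction.measure_Ioo]
  exact ENNReal.ofReal_le_ofReal
    (sub_le_sub (hP.leftLim_stieltjesFunction_le_s16 b) (hP.le_rightLim le_rfl))

theorem ofReal_sub_sub_sub_le_singularPart_add_lintegral (hP : Monotone P) (hQ : Monotone Q)
    (hab : a ≤ b) :
    ENNReal.ofReal ((P b - P a) - (Q b - Q a))
      ≤ hP.stieltjesFunction.measure.singularPart volume (Icc a b)
        + ∫⁻ t in Icc a b, (hP.stieltjesFunction.measure.rnDeriv volume t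
            - hQ.stieltjesFunction.measure.rnDeriv volume t) := by
  set μP := hP.stieltjesFunction.measure
  set μQ := hQ.stieltjesFunction.measure
  have hP_le : ENNReal.ofReal (P b - P a)
      ≤ μP.singularPart volume (Icc a b) + ∫⁻ t in Icc a b, μP.rnDeriv volume t := by
    rw [← withDensity_apply _ measurableSet_Icc, ← Measure.add_apply,
      ← μP.haveLebesgueDecomposition_add volume]
    exact hP.ofReal_sub_le_measure_Icc_s16
  have hQ_ge : ∫⁻ t in Icc a b, μQ.rnDeriv volume t ≤ ENNReal.ofReal (Q b - Q a) := by
    rw [setLIntegral_congr Ioo_ae_eq_Icc.symm]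
    exact (Measure.setLIntegral_rnDeriv_le _).trans hQ.measure_Ioo_le_ofReal_sub_s16
  have hP_split : ∫⁻ t in Icc a b, μP.rnDeriv volume t
      ≤ (∫⁻ t in Icc a b, (μP.rnDeriv volume t - μQ.rnDeriv volume t))
        + ∫⁻ t in Icc a b, μQ.rnDeriv volume t := by
    rw [← lintegral_add_right _ (μQ.measurable_rnDeriv volume)]
    exact lintegral_mono fun t => le_tsub_add
  calc ENNReal.ofReal ((P b - P a) - (Q b - Q a))
      = ENNReal.ofReal (P b - P a) - ENNReal.ofReal (Q b - Q a) :=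
        ENNReal.ofReal_sub _ (sub_nonneg.2 (hQ hab))
    _ ≤ (μP.singularPart volume (Icc a b) + ∫⁻ t in Icc a b, μP.rnDeriv volume t)
        - ∫⁻ t in Icc a b, μQ.rnDeriv volume t := tsub_le_tsub hP_le hQ_ge
    _ ≤ μP.singularPart volume (Icc a b) + ((∫⁻ t in Icc a b, μP.rnDeriv volume t)
        - ∫⁻ t in Icc a b, μQ.rnDeriv volume t) := add_tsub_le_assoc
    _ ≤ _ := add_le_add le_rfl (tsub_le_iff_right.2 hP_split)

theorem ofReal_abs_sub_le_singularPart_add_lintegral {V f : ℝ → ℝ} (hV : Monotone V)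
    (hf : ∀ a b, a ≤ b → |f b - f a| ≤ V b - V a) (hab : a ≤ b) :
    ENNReal.ofReal |f b - f a|
      ≤ hV.stieltjesFunction.measure.singularPart volume (Icc a b)
        + ∫⁻ t in Icc a b, ‖deriv f t‖ₑ := by
  -- `f = P - Q` with `P + Q = V`, so the singular parts of `P` and `Q` are dominated by that of `V`
  have hP : Monotone fun t => (V t + f t) / 2 := fun x y hxy => by
    linarith [(abs_le.1 (hf x y hxy)).1]
  have hQ : Monotone fun t => (V t - f t) / 2 := fun x y hxy => by
    linarith [(abs_le.1 (hf x y hxy)).2]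
  set μP := hP.stieltjesFunction.measure
  set μQ := hQ.stieltjesFunction.measure
  have hsum : hV.stieltjesFunction.measure = μP + μQ := by
    rw [← StieltjesFunction.measure_add]
    congr 1
    ext z
    refine rightLim_eq_of_tendsto ?_
    exact ((hP.tendsto_rightLim z).add (hQ.tendsto_rightLim z)).congr fun s => by ring
  have hσP : μP.singularPart volume ≤ hV.stieltjesFunction.measure.singularPart volume := by
    rw [hsum, Measure.singularPart_add]; exact Measure.le_add_right le_rfl
  have hσQ : μQ.singularPart volume ≤ hV.stieltjesFunction.measure.singularPart volume := by
    rw [hsum, Measure.singularPart_add]; exact Measure.le_add_left le_rfl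
  have hderiv : ∀ᵐ t, μP.rnDeriv volume t - μQ.rnDeriv volume t ≤ ‖deriv f t‖ₑ
      ∧ μQ.rnDeriv volume t - μP.rnDeriv volume t ≤ ‖deriv f t‖ₑ := by
    filter_upwards [hP.ae_hasDerivAt, hQ.ae_hasDerivAt, μP.rnDeriv_lt_top volume,
      μQ.rnDeriv_lt_top volume] with t hPt hQt hPfin hQfin
    have hft : HasDerivAt f ((μP.rnDeriv volume t).toReal - (μQ.rnDeriv volume t).toReal) t := by
      refine (hPt.sub hQt).congr_of_eventuallyEq (Eventually.of_forall fun s => ?_)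
      simp only [Pi.sub_apply]; ring
    rw [hft.deriv, Real.enorm_eq_ofReal_abs]
    refine ⟨ENNReal.tsub_le_ofReal_abs_toReal_sub hPfin.ne hQfin.ne, ?_⟩
    rw [abs_sub_comm]
    exact ENNReal.tsub_le_ofReal_abs_toReal_sub hQfin.ne hPfin.ne
  have hmeas := (measurable_deriv f).enorm.aemeasurable (μ := volume.restrict (Icc a b))
  rw [abs_eq_max_neg, ENNReal.ofReal_max]
  refine max_le ?_ ?_
  · calc ENNReal.ofReal (f b - f a)
        = ENNReal.ofReal (((V b + f b) / 2 - (V a + f a) / 2)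
            - ((V b - f b) / 2 - (V a - f a) / 2)) := by ring_nf
      _ ≤ _ := hP.ofReal_sub_sub_sub_le_singularPart_add_lintegral hQ hab
      _ ≤ _ := add_le_add (hσP _) <| setLIntegral_mono_ae hmeas <| by
          filter_upwards [hderiv] with t ht _ using ht.1
  · calc ENNReal.ofReal (-(f b - f a))
        = ENNReal.ofReal (((V b - f b) / 2 - (V a - f a) / 2)
            - ((V b + f b) / 2 - (V a + f a) / 2)) := by ring_nf
      _ ≤ _ := hQ.ofReal_sub_sub_sub_le_singularPart_add_lintegral hP hab
      _ ≤ _ := add_le_add (hσQ _) <| setLIntegral_mono_ae hmeas <| by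
          filter_upwards [hderiv] with t ht _ using ht.2

end Monotone

theorem edist_le_iSup_ofReal_abs_dist_sub {X : Type*} [PseudoMetricSpace X] {x : ℕ → X} {y : X}
    (hy : y ∈ closure (range x)) (z : X) :
    edist y z ≤ ⨆ n, ENNReal.ofReal |dist z (x n) - dist y (x n)| := by
  refine ENNReal.le_of_forall_pos_le_add fun ε hε _ => ?_
  obtain ⟨n, hn⟩ := Metric.mem_closure_range_iff.1 hy (ε / 2) (by positivity)
  have hdist : dist y z ≤ |dist z (x n) - dist y (x n)| + ε := by
    linarith [dist_triangle_right y z (x n), le_abs_self (dist z (x n) - dist y (x n))]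
  calc edist y z = ENNReal.ofReal (dist y z) := edist_dist y z
    _ ≤ ENNReal.ofReal |dist z (x n) - dist y (x n)| + ε := by
      grw [hdist, ENNReal.ofReal_add (abs_nonneg _) ε.coe_nonneg, ENNReal.ofReal_coe_nnreal]
    _ ≤ _ := add_le_add (le_iSup (fun n => ENNReal.ofReal |dist z (x n) - dist y (x n)|) n) le_rfl

theorem exists_seq_range_subset_closure_of_dist_le {X : Type*} [MetricSpace X] {γ : ℝ → X}
    {V : ℝ → ℝ} (h : ∀ a b, dist (γ a) (γ b) ≤ |V b - V a|) :
    ∃ x : ℕ → X, range γ ⊆ closure (range x) := by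
  let g : range V → X := fun v => γ v.2.choose
  have hg : LipschitzWith 1 g := LipschitzWith.of_dist_le_mul fun v w => by
    have := h v.2.choose w.2.choose
    rw [v.2.choose_spec, w.2.choose_spec] at this
    simpa [g, Subtype.dist_eq, Real.dist_eq, abs_sub_comm] using this
  have hrange : range γ ⊆ range g := by
    rintro _ ⟨t, rfl⟩
    refine ⟨⟨V t, t, rfl⟩, dist_le_zero.1 ?_⟩
    simpa [(⟨t, rfl⟩ : V t ∈ range V).choose_spec] using h (⟨t, rfl⟩ : V t ∈ range V).choose t
  obtain ⟨c, hc, hsub⟩ := (TopologicalSpace.isSeparable_range hg.continuous).mono hrange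
  obtain rfl | hne := c.eq_empty_or_nonempty
  · exact ⟨fun _ => γ 0, fun y hy => by simpa using hsub hy⟩
  obtain ⟨x, rfl⟩ := hc.exists_eq_range hne
  exact ⟨x, hsub⟩

theorem ae_ofReal_le_rnDeriv_of_hasDerivAt {V : ℝ → ℝ} {ν : Measure ℝ}
    [IsLocallyFiniteMeasure ν] (h : ∀ a b, a ≤ b → ENNReal.ofReal (V b - V a) ≤ ν (Icc a b)) :
    ∀ᵐ t, ∀ L, HasDerivAt V L t → ENNReal.ofReal L ≤ ν.rnDeriv volume t := by
  filter_upwards [VitaliFamily.ae_tendsto_rnDeriv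
    (IsUnifLocDoublingMeasure.vitaliFamily (volume : Measure ℝ) 1) ν] with t ht L hL
  have hslope : Tendsto (fun s => (V s - V t) / (s - t)) (𝓝[>] t) (𝓝 L) := by
    simpa only [slope_fun_def_field] using
      (hasDerivAt_iff_tendsto_slope.1 hL).mono_left (nhdsGT_le_nhdsNE t)
  refine le_of_tendsto_of_tendsto (ENNReal.tendsto_ofReal hslope)
    (ht.comp (Real.tendsto_Icc_vitaliFamily_right t)) ?_
  filter_upwards [self_mem_nhdsWithin] with s (hs : t < s)
  rw [Function.comp_apply, Real.volume_Icc, ENNReal.ofReal_div_of_pos (sub_pos.2 hs)]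
  exact ENNReal.div_le_div_right (h t s hs.le) _

section SupDerivDist

variable {X : Type*} [PseudoMetricSpace X] {γ : ℝ → X} {x : ℕ → X} {V : ℝ → ℝ}

noncomputable def supDerivDist (γ : ℝ → X) (x : ℕ → X) (t : ℝ) : ℝ≥0∞ :=
  ⨆ n, ‖deriv (fun s => dist (γ s) (x n)) t‖ₑ

theorem measurable_supDerivDist : Measurable (supDerivDist γ x) :=
  Measurable.iSup fun _ => (measurable_deriv _).enorm

theorem abs_dist_sub_dist_le_of_dist_le (hγV : ∀ a b, dist (γ a) (γ b) ≤ |V b - V a|) (n : ℕ)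
    (a b : ℝ) : |dist (γ b) (x n) - dist (γ a) (x n)| ≤ |V b - V a| :=
  (abs_dist_sub_le _ _ _).trans ((dist_comm _ _).trans_le (hγV a b))

namespace Monotone

variable {a b : ℝ}

theorem edist_le_singularPart_add_lintegral_supDerivDist (hV : Monotone V)
    (hγV : ∀ a b, dist (γ a) (γ b) ≤ |V b - V a|) (hx : range γ ⊆ closure (range x))
    (hab : a ≤ b) :
    edist (γ a) (γ b) ≤ hV.stieltjesFunction.measure.singularPart volume (Icc a b)
      + ∫⁻ t in Icc a b, supDerivDist γ x t := by
  refine (edist_le_iSup_ofReal_abs_dist_sub (hx ⟨a, rfl⟩) _).trans (iSup_le fun n => ?_)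
  refine (hV.ofReal_abs_sub_le_singularPart_add_lintegral (f := fun s => dist (γ s) (x n))
    (fun a b hab => ?_) hab).trans ?_
  · exact (abs_dist_sub_dist_le_of_dist_le hγV n a b).trans_eq
      (abs_of_nonneg (sub_nonneg.2 (hV hab)))
  · exact add_le_add le_rfl (lintegral_mono fun t =>
      le_iSup (fun n => ‖deriv (fun s => dist (γ s) (x n)) t‖ₑ) n)

theorem eVariationOn_Icc_le_withDensity_supDerivDist_add (hV : Monotone V)
    (hγV : ∀ a b, dist (γ a) (γ b) ≤ |V b - V a|) (hx : range γ ⊆ closure (range x)) (u v : ℝ) :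
    eVariationOn γ (Icc u v) ≤ (volume.withDensity (supDerivDist γ x)
      + hV.stieltjesFunction.measure.singularPart volume
      + hV.stieltjesFunction.measure.singularPart volume) (Icc u v) := by
  set σ := hV.stieltjesFunction.measure.singularPart volume
  refine (eVariationOn_Icc_le_of_edist_le_Ico_add_Ioc
    (μ := volume.withDensity (supDerivDist γ x) + σ) (ν := σ) (fun a b hab => ?_) u v).trans_eq rfl
  calc edist (γ a) (γ b) ≤ σ (Icc a b) + ∫⁻ t in Icc a b, supDerivDist γ x t :=
        hV.edist_le_singularPart_add_lintegral_supDerivDist hγV hx hab.le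
    _ ≤ (σ (Ico a b) + σ (Ioc a b)) + ∫⁻ t in Ico a b, supDerivDist γ x t := by
        refine add_le_add ((measure_mono fun s hs => ?_).trans (measure_union_le _ _))
          (setLIntegral_congr Ico_ae_eq_Icc).ge
        rcases hs.2.lt_or_eq with h | rfl
        · exact Or.inl ⟨hs.1, h⟩
        · exact Or.inr ⟨hab, le_rfl⟩
    _ = (volume.withDensity (supDerivDist γ x) + σ) (Ico a b) + σ (Ioc a b) := by
        rw [Measure.add_apply, withDensity_apply _ measurableSet_Ico]; ring

theorem supDerivDist_ae_le_rnDeriv (hV : Monotone V)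
    (hγV : ∀ a b, dist (γ a) (γ b) ≤ |V b - V a|) :
    supDerivDist γ x ≤ᵐ[volume] hV.stieltjesFunction.measure.rnDeriv volume := by
  filter_upwards [hV.ae_hasDerivAt, hV.stieltjesFunction.measure.rnDeriv_lt_top volume]
    with t ht hfin
  refine iSup_le fun n => ?_
  rw [Real.enorm_eq_ofReal_abs, ← ENNReal.ofReal_toReal hfin.ne]
  exact ENNReal.ofReal_le_ofReal ((abs_deriv_le_of_abs_sub_le ht
    (abs_dist_sub_dist_le_of_dist_le hγV n t)).trans_eq (abs_of_nonneg ENNReal.toReal_nonneg))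

end Monotone

theorem tendsto_dist_div_abs_sub_of_hasDerivAt {t L : ℝ} (hV : HasDerivAt V L t) (hL : 0 < L)
    (hdist : ∀ s, dist (γ s) (γ t) ≤ |V s - V t|) (hm : ENNReal.ofReal L ≤ supDerivDist γ x t) :
    Tendsto (fun s => dist (γ s) (γ t) / |V s - V t|) (𝓝[≠] t) (𝓝 1) := by
  have hVslope := hV.tendsto_abs_sub_div_abs_sub
  rw [abs_of_pos hL] at hVslope
  have hmetric : Tendsto (fun s => dist (γ s) (γ t) / |s - t|) (𝓝[≠] t) (𝓝 L) := by
    refine tendsto_order.2 ⟨fun c hc => ?_, fun c hc => ?_⟩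
    · rcases lt_or_ge c 0 with hc0 | hc0
      · exact Eventually.of_forall fun s => hc0.trans_le (by positivity)
      obtain ⟨n, hn⟩ := lt_iSup_iff.1 (((ENNReal.ofReal_lt_ofReal_iff hL).2 hc).trans_le hm)
      rw [Real.enorm_eq_ofReal_abs, ENNReal.ofReal_lt_ofReal_iff'] at hn
      have hdiff := differentiableAt_of_deriv_ne_zero (abs_pos.1 hn.2)
      filter_upwards [hdiff.hasDerivAt.tendsto_abs_sub_div_abs_sub.eventually (lt_mem_nhds hn.1)]
        with s hs
      exact hs.trans_le (div_le_div_of_nonneg_right (abs_dist_sub_le _ _ _) (abs_nonneg _))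
    · filter_upwards [hVslope.eventually (gt_mem_nhds hc)] with s hs
      exact (div_le_div_of_nonneg_right (hdist s) (abs_nonneg _)).trans_lt hs
  have hratio := hmetric.div hVslope hL.ne'
  rw [div_self hL.ne'] at hratio
  refine hratio.congr' ?_
  filter_upwards [self_mem_nhdsWithin] with s (hs : s ≠ t)
  exact div_div_div_cancel_right₀ (abs_ne_zero.2 (sub_ne_zero.2 hs)) _ _

end SupDerivDist

namespace LocallyBoundedVariationOn

section PseudoEMetricSpace

variable {E : Type*} [PseudoEMetricSpace E] {γ : ℝ → E}

theorem monotone_variationOnFromTo (hγ : LocallyBoundedVariationOn γ univ) (c : ℝ) :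
    Monotone (variationOnFromTo γ univ c) :=
  monotoneOn_univ.1 (variationOnFromTo.monotoneOn hγ (mem_univ c))

theorem ofReal_variationOnFromTo_sub (hγ : LocallyBoundedVariationOn γ univ) (c : ℝ) {a b : ℝ}
    (hab : a ≤ b) :
    ENNReal.ofReal (variationOnFromTo γ univ c b - variationOnFromTo γ univ c a)
      = eVariationOn γ (Icc a b) := by
  rw [variationOnFromTo.sub_right hγ (mem_univ c) (mem_univ b) (mem_univ a),
    variationOnFromTo.eq_of_le _ _ hab, ENNReal.ofReal_toReal (hγ a b (mem_univ a) (mem_univ b)),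
    univ_inter]

theorem eVariationOn_uIcc (hγ : LocallyBoundedVariationOn γ univ) (c t s : ℝ) :
    eVariationOn γ (uIcc t s)
      = ENNReal.ofReal |variationOnFromTo γ univ c s - variationOnFromTo γ univ c t| := by
  rcases le_total t s with h | h
  · rw [uIcc_of_le h, abs_of_nonneg (sub_nonneg.2 (hγ.monotone_variationOnFromTo c h)),
      hγ.ofReal_variationOnFromTo_sub c h]
  · rw [uIcc_of_ge h, abs_sub_comm,
      abs_of_nonneg (sub_nonneg.2 (hγ.monotone_variationOnFromTo c h)),
      hγ.ofReal_variationOnFromTo_sub c h]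

end PseudoEMetricSpace

variable {X : Type*} [PseudoMetricSpace X] {γ : ℝ → X}

theorem dist_le_abs_variationOnFromTo_sub (hγ : LocallyBoundedVariationOn γ univ) (c a b : ℝ) :
    dist (γ a) (γ b) ≤ |variationOnFromTo γ univ c b - variationOnFromTo γ univ c a| := by
  rw [dist_edist, ← ENNReal.toReal_ofReal (abs_nonneg _), ← hγ.eVariationOn_uIcc c a b]
  refine ENNReal.toReal_mono ?_ (eVariationOn.edist_le γ left_mem_uIcc right_mem_uIcc)
  rw [hγ.eVariationOn_uIcc c]; exact ENNReal.ofReal_ne_top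

theorem ae_ofReal_le_supDerivDist (hγ : LocallyBoundedVariationOn γ univ) {x : ℕ → X}
    (hx : range γ ⊆ closure (range x)) :
    ∀ᵐ t, ∀ L, HasDerivAt (variationOnFromTo γ univ 0) L t →
      ENNReal.ofReal L ≤ supDerivDist γ x t := by
  have hV := hγ.monotone_variationOnFromTo 0
  have hγV := hγ.dist_le_abs_variationOnFromTo_sub 0
  set μV := hV.stieltjesFunction.measure
  set σ := μV.singularPart volume
  set ν := volume.withDensity (supDerivDist γ x) + σ + σ
  have hν_le : ν ≤ (3 : ℝ≥0) • μV := by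
    calc ν ≤ μV + μV + μV :=
          add_le_add (add_le_add ((withDensity_mono (hV.supDerivDist_ae_le_rnDeriv hγV)).trans
            (μV.withDensity_rnDeriv_le volume)) (μV.singularPart_le volume))
            (μV.singularPart_le volume)
      _ = (3 : ℝ≥0) • μV := by ext s; simp [Measure.add_apply]; ring
  have : IsLocallyFiniteMeasure ν := Measure.isLocallyFiniteMeasure_of_le hν_le
  have hrn : supDerivDist γ x =ᵐ[volume] ν.rnDeriv volume := by
    refine Measure.eq_rnDeriv (s := σ + σ) measurable_supDerivDist
      ((μV.mutuallySingular_singularPart volume).add_left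
        (μV.mutuallySingular_singularPart volume)) ?_
    simp only [ν]; abel
  have hvar : ∀ a b, a ≤ b →
      ENNReal.ofReal (variationOnFromTo γ univ 0 b - variationOnFromTo γ univ 0 a) ≤ ν (Icc a b) :=
    fun a b hab => (hγ.ofReal_variationOnFromTo_sub 0 hab).trans_le
      (hV.eVariationOn_Icc_le_withDensity_supDerivDist_add hγV hx a b)
  filter_upwards [ae_ofReal_le_rnDeriv_of_hasDerivAt hvar, hrn] with t ht hmt L hL
  exact (ht L hL).trans_eq hmt.symm

end LocallyBoundedVariationOn

section Dichotomy

variable {X : Type*} [MetricSpace X]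

def VariationDichotomy (γ : ℝ → X) (l : Filter ℝ) (t : ℝ) : Prop :=
  liminf (fun s => eVariationOn γ (uIcc t s) / ENNReal.ofReal |s - t|) l = 0 ∨
    Tendsto (fun s => dist (γ s) (γ t) / (eVariationOn γ (uIcc t s)).toReal) l (𝓝 1)

theorem LocallyBoundedVariationOn.ae_variationDichotomy {γ : ℝ → X}
    (hγ : LocallyBoundedVariationOn γ univ) : ∀ᵐ t, VariationDichotomy γ (𝓝[≠] t) t := by
  obtain ⟨x, hx⟩ :=
    exists_seq_range_subset_closure_of_dist_le (hγ.dist_le_abs_variationOnFromTo_sub 0)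
  filter_upwards [(hγ.monotone_variationOnFromTo 0).ae_hasDerivAt,
    hγ.ae_ofReal_le_supDerivDist hx] with t hV hm
  simp only [VariationDichotomy, hγ.eVariationOn_uIcc 0 t]
  rcases ENNReal.toReal_nonneg.eq_or_lt with hL | hL
  · left
    have hslope := ENNReal.tendsto_ofReal hV.tendsto_abs_sub_div_abs_sub
    rw [← hL, abs_zero, ENNReal.ofReal_zero] at hslope
    refine (hslope.congr' ?_).liminf_eq
    filter_upwards [self_mem_nhdsWithin] with s (hs : s ≠ t)
    rw [ENNReal.ofReal_div_of_pos (abs_pos.2 (sub_ne_zero.2 hs))]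
  · right
    simp only [ENNReal.toReal_ofReal (abs_nonneg _)]
    refine tendsto_dist_div_abs_sub_of_hasDerivAt hV hL (fun s => ?_) (hm _ hV)
    rw [dist_comm]
    exact hγ.dist_le_abs_variationOnFromTo_sub 0 t s

theorem VariationDichotomy.of_eqOn {γ γ' : ℝ → X} {S : Set ℝ} (hS : S.OrdConnected)
    (h : EqOn γ γ' S) {t : ℝ} (ht : S ∈ 𝓝 t) (h' : VariationDichotomy γ' (𝓝[≠] t) t) :
    VariationDichotomy γ (𝓝[≠] t) t := by
  have htS := mem_of_mem_nhds ht
  have hev : ∀ᶠ s in 𝓝[≠] t, eVariationOn γ (uIcc t s) = eVariationOn γ' (uIcc t s)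
      ∧ dist (γ s) (γ t) = dist (γ' s) (γ' t) := by
    filter_upwards [mem_nhdsWithin_of_mem_nhds ht] with s hs
    exact ⟨eVariationOn.eq_of_eqOn (h.mono (hS.uIcc_subset htS hs)), by rw [h hs, h htS]⟩
  rcases h' with h' | h'
  · left
    rw [← h']
    exact liminf_congr (hev.mono fun s hs => by rw [hs.1])
  · right
    exact h'.congr' (hev.mono fun s hs => by simp only [hs.1, hs.2])

theorem ae_variationDichotomy_of_mem_Ioo {γ : ℝ → X} {p q : ℝ} (hpq : p ≤ q)
    (hγ : eVariationOn γ (Icc p q) ≠ ⊤) :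
    ∀ᵐ t, t ∈ Ioo p q → VariationDichotomy γ (𝓝[≠] t) t := by
  set π : ℝ → ℝ := fun s => projIcc p q hpq s
  have hπ : ∀ s ∈ Icc p q, π s = s := fun s hs => by simp [π, projIcc_of_mem hpq hs]
  have hπ_range : range π = Icc p q :=
    Subset.antisymm (range_subset_iff.2 fun s => (projIcc p q hpq s).2) fun s hs => ⟨s, hπ s hs⟩
  have hγπ : LocallyBoundedVariationOn (γ ∘ π) univ := by
    refine BoundedVariationOn.locallyBoundedVariationOn ?_
    rwa [BoundedVariationOn, eVariationOn.comp_eq_of_monotoneOn _ π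
      (((Subtype.mono_coe _).comp (monotone_projIcc hpq)).monotoneOn univ), image_univ, hπ_range]
  filter_upwards [hγπ.ae_variationDichotomy] with t ht htpq
  exact ht.of_eqOn ordConnected_Icc (fun s hs => by rw [Function.comp_apply, hπ s hs])
    (Icc_mem_nhds htpq.1 htpq.2)

end Dichotomy

theorem exists_rat_mem_mem_Ioo_of_mem_nhds {S : Set ℝ} {t : ℝ} (h : S ∈ 𝓝 t) :
    ∃ p q : ℚ, (p : ℝ) ∈ S ∧ (q : ℝ) ∈ S ∧ t ∈ Ioo (p : ℝ) q := by
  obtain ⟨ε, hε, hball⟩ := Metric.mem_nhds_iff.1 h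
  obtain ⟨p, hp⟩ := exists_rat_btwn (show t - ε < t by linarith)
  obtain ⟨q, hq⟩ := exists_rat_btwn (show t < t + ε by linarith)
  refine ⟨p, q, hball ?_, hball ?_, hp.2, hq.1⟩ <;>
    rw [Real.ball_eq_Ioo] <;> constructor <;> linarith [hp.1, hp.2, hq.1, hq.2]

/-- For `γ ∈ BV_loc(I;X)` and Lebesgue-a.e. `t ∈ I`, either
`liminf_{ε→0} Var(γ;[t∧(t+ε), t∨(t+ε)])/|ε| = 0`, or
`lim_{ε→0} d(γ(t+ε),γ(t)) / Var(γ;[t∧(t+ε), t∨(t+ε)]) = 1`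
(limits over `s = t+ε ∈ I`, `s ≠ t`). -/
theorem variation_vs_distance_dichotomy {X : Type*} [MetricSpace X]
    (I : Set ℝ) (hI : I.OrdConnected) (γ : ℝ → X)
    (hγ : ∀ a ∈ I, ∀ b ∈ I, a ≤ b → eVariationOn γ (Set.Icc a b) < ⊤) :
    ∀ᵐ t ∂(volume.restrict I),
      (Filter.liminf (fun s => eVariationOn γ (Set.uIcc t s) / ENNReal.ofReal |s - t|)
          (𝓝[I \ {t}] t) = 0) ∨
      Tendsto (fun s => dist (γ s) (γ t) / (eVariationOn γ (Set.uIcc t s)).toReal)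
        (𝓝[I \ {t}] t) (𝓝 1) := by
  have hlocal : ∀ᵐ t, ∀ p q : ℚ, (p : ℝ) ∈ I → (q : ℝ) ∈ I → t ∈ Ioo (p : ℝ) q →
      VariationDichotomy γ (𝓝[≠] t) t := by
    refine ae_all_iff.2 fun p => ae_all_iff.2 fun q => ?_
    by_cases hpq : (p : ℝ) ∈ I ∧ (q : ℝ) ∈ I ∧ (p : ℝ) ≤ q
    · filter_upwards [ae_variationDichotomy_of_mem_Ioo hpq.2.2
        (hγ _ hpq.1 _ hpq.2.1 hpq.2.2).ne] with t ht _ _ using ht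
    · exact Eventually.of_forall fun t hp hq ht => absurd ⟨hp, hq, (ht.1.trans ht.2).le⟩ hpq
  have hinterior : ∀ᵐ t ∂(volume.restrict I), t ∈ interior I := by
    refine (ae_restrict_iff' hI.measurableSet).2 ?_
    filter_upwards [measure_eq_zero_iff_ae_notMem.1
      ((convex_iff_ordConnected.2 hI).addHaar_frontier volume)] with t ht htI
    by_contra h
    exact ht ⟨subset_closure htI, h⟩
  filter_upwards [ae_restrict_of_ae hlocal, hinterior] with t hloc ht
  have hI_nhds := mem_interior_iff_mem_nhds.1 ht
  obtain ⟨p, q, hp, hq, htpq⟩ := exists_rat_mem_mem_Ioo_of_mem_nhds hI_nhds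
  rw [sdiff_eq, nhdsWithin_inter_of_mem (mem_nhdsWithin_of_mem_nhds hI_nhds)]
  exact hloc p q hp hq htpq
end
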